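/- arXiv:2210.02409 — 9 statements merged into one kernel-verified Lean document; each statement's English description precedes it below -/
import Mathlib

section
/- Let p be a prime, q a power of p, and 1 ≤ s < q. If k is a nonnegative integer such that q divides k - i for some 0 ≤ i ≤ s-1, then v_p(s!) < v_p(k(k-1)⋯(k-s+1)). -/
/-! Write `k = s! · C(k, s)` when `s ≤ k`. Since `k mod q < s = s mod q`, adding `s` and `k - s`
in base `p` carries out of the `m`-th digit, so Kummer's theorem gives `p ∣ C(k, s)`.
When `k < s` the falling factorial vanishes. -/

theorem Nat.Prime.emultiplicity_lt_emultiplicity_mul_of_dvd {p a c : ℕ} (hp : p.Prime)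
    (ha : a ≠ 0) (hc : p ∣ c) : emultiplicity p a < emultiplicity p (a * c) := by
  have hfin : emultiplicity p a ≠ ⊤ :=
    (emultiplicity_lt_top.2 (Nat.finiteMultiplicity_iff.2 ⟨hp.ne_one, Nat.pos_of_ne_zero ha⟩)).ne
  rw [_root_.emultiplicity_mul hp.prime]
  simpa using (ENat.add_lt_add_iff_left hfin).2 (emultiplicity_pos_of_dvd hc)

theorem Nat.Prime.dvd_choose_of_mod_pow_lt {p m k s : ℕ} (hp : p.Prime) (hsk : s ≤ k)
    (h : k % p ^ m < s % p ^ m) : p ∣ k.choose s := by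
  have hm : m ≠ 0 := by
    rintro rfl
    simp only [pow_zero, Nat.mod_one, lt_self_iff_false] at h
  have hcarry : p ^ m ≤ s % p ^ m + (k - s) % p ^ m := by
    by_contra! hlt
    have hk : k % p ^ m = s % p ^ m + (k - s) % p ^ m := by
      conv_lhs => rw [← Nat.add_sub_cancel' hsk]
      rw [Nat.add_mod, Nat.mod_eq_of_lt hlt]
    exact h.not_ge (hk ▸ Nat.le_add_right _ _)
  rw [← dvd_iff_emultiplicity_pos,
    hp.emultiplicity_choose hsk (Nat.lt_succ_of_le (le_max_left (Nat.log p k) m))]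
  refine Nat.cast_pos.2 (Finset.card_pos.2 ⟨m, ?_⟩)
  simp only [Finset.mem_filter, Finset.mem_Ico]
  exact ⟨⟨Nat.one_le_iff_ne_zero.2 hm, Nat.lt_succ_of_le (le_max_right _ _)⟩, hcarry⟩

theorem stmt_1_general (p q m s : ℕ) (hp : p.Prime) (hq : q = p ^ m)
    (hsq : s < q) (k : ℕ)
    (hdvd : ∃ i < s, (q : ℤ) ∣ (k : ℤ) - (i : ℤ)) :
    emultiplicity p (Nat.factorial s) < emultiplicity p (Nat.descFactorial k s) := by
  obtain ⟨i, his, hdvd⟩ := hdvd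
  have hkq : k % q < s % q := by
    have hik : i ≡ k [MOD q] := Int.natCast_modEq_iff.1 (Int.modEq_iff_dvd.2 hdvd)
    rw [← hik, Nat.mod_eq_of_lt (his.trans hsq), Nat.mod_eq_of_lt hsq]
    exact his
  rcases lt_or_ge k s with hks | hks
  · rw [Nat.descFactorial_eq_zero_iff_lt.2 hks, emultiplicity_zero]
    exact emultiplicity_lt_top.2 (Nat.finiteMultiplicity_iff.2 ⟨hp.ne_one, s.factorial_pos⟩)
  · rw [Nat.descFactorial_eq_factorial_mul_choose]
    subst hq
    exact hp.emultiplicity_lt_emultiplicity_mul_of_dvd s.factorial_ne_zero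
      (hp.dvd_choose_of_mod_pow_lt hks hkq)

theorem stmt_1 (p q m s : ℕ) (hp : p.Prime) (hq : q = p ^ m)
    (hs1 : 1 ≤ s) (hsq : s < q) (k : ℕ)
    (hdvd : ∃ i < s, (q : ℤ) ∣ (k : ℤ) - (i : ℤ)) :
    emultiplicity p (Nat.factorial s) < emultiplicity p (Nat.descFactorial k s) :=
  stmt_1_general p q m s hp hq hsq k hdvd
end

section
/- Let p be a prime and L ⊆ {1,…,p−1} with |L| = s. If F ⊆ 2^[n] is a family such that for all distinct A, B ∈ F, |A \ B| is congruent modulo p to some element of L, then |F| ≤ Σ_{i=0}^{s} C(n, i). -/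
open Finset

/-- Monomial function: indicator that `S ⊆ B`. -/
noncomputable def mon7 (p n : ℕ) (S : Finset (Fin n)) : Finset (Fin n) → ZMod p :=
  fun B => if S ⊆ B then 1 else 0

lemma mon7_indicator_mul (p n : ℕ) (A S B : Finset (Fin n)) :
    ((A ∩ B).card : ZMod p) * mon7 p n S B = ∑ i ∈ A, mon7 p n (insert i S) B := by
  classical
  by_cases h : S ⊆ B
  · simp only [mon7, h, if_true, mul_one, Finset.insert_subset_iff, h, and_true]
    rw [← Finset.filter_mem_eq_inter]
    rw [Finset.card_filter]
    push_cast
    rfl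
  · simp only [mon7, h, if_false, mul_zero]
    rw [eq_comm, Finset.sum_eq_zero]
    intro i _
    have : ¬ insert i S ⊆ B := fun hc => h (Finset.Subset.trans (Finset.subset_insert i S) hc)
    simp [this]

lemma mul_mem_span7 (p n : ℕ) (c : ZMod p) (A : Finset (Fin n)) (k : ℕ)
    (f : Finset (Fin n) → ZMod p)
    (hf : f ∈ Submodule.span (ZMod p) (mon7 p n '' {S | S.card ≤ k})) :
    (fun B => (c - ((A ∩ B).card : ZMod p)) * f B)
      ∈ Submodule.span (ZMod p) (mon7 p n '' {S | S.card ≤ k + 1}) := by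
  classical
  induction hf using Submodule.span_induction with
  | mem g hg =>
    obtain ⟨S, hS, rfl⟩ := hg
    have hrw : (fun B => (c - ((A ∩ B).card : ZMod p)) * mon7 p n S B)
        = c • mon7 p n S - ∑ i ∈ A, mon7 p n (insert i S) := by
      funext B
      simp only [Pi.sub_apply, Pi.smul_apply, Finset.sum_apply, smul_eq_mul, sub_mul]
      rw [mon7_indicator_mul]
    rw [hrw]
    refine Submodule.sub_mem _ (Submodule.smul_mem _ _ ?_) (Submodule.sum_mem _ ?_)
    · exact Submodule.subset_span ⟨S, le_trans hS (Nat.le_succ k), rfl⟩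
    · intro i _
      refine Submodule.subset_span ⟨insert i S, ?_, rfl⟩
      exact le_trans (Finset.card_insert_le i S) (Nat.succ_le_succ hS)
  | zero =>
    have : (fun B => (c - ((A ∩ B).card : ZMod p)) * (0 : Finset (Fin n) → ZMod p) B) = 0 := by
      funext B; simp
    rw [this]; exact Submodule.zero_mem _
  | add g h _ _ hg hh =>
    have : (fun B => (c - ((A ∩ B).card : ZMod p)) * (g + h) B)
        = (fun B => (c - ((A ∩ B).card : ZMod p)) * g B)
          + (fun B => (c - ((A ∩ B).card : ZMod p)) * h B) := by
      funext B; simp [mul_add]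
    rw [this]; exact Submodule.add_mem _ hg hh
  | smul a g _ hg =>
    have : (fun B => (c - ((A ∩ B).card : ZMod p)) * (a • g) B)
        = a • (fun B => (c - ((A ∩ B).card : ZMod p)) * g B) := by
      funext B; simp [smul_eq_mul]; ring
    rw [this]; exact Submodule.smul_mem _ a hg

lemma P_mem_span7 (p n : ℕ) (A : Finset (Fin n)) (L' : Finset ℕ) :
    (fun B => ∏ ℓ ∈ L', ((A.card : ZMod p) - ℓ - ((A ∩ B).card : ZMod p)))
      ∈ Submodule.span (ZMod p) (mon7 p n '' {S | S.card ≤ L'.card}) := by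
  classical
  induction L' using Finset.induction with
  | empty =>
    have : (fun _ : Finset (Fin n) => (1 : ZMod p)) = mon7 p n ∅ := by
      funext B; simp [mon7]
    simp only [Finset.prod_empty, Finset.card_empty]
    rw [this]
    exact Submodule.subset_span ⟨∅, by simp, rfl⟩
  | @insert ℓ L' hℓ ih =>
    have hrw : (fun B => ∏ m ∈ insert ℓ L', ((A.card : ZMod p) - m - ((A ∩ B).card : ZMod p)))
        = fun B => (((A.card : ZMod p) - ℓ) - ((A ∩ B).card : ZMod p))
            * ∏ m ∈ L', ((A.card : ZMod p) - m - ((A ∩ B).card : ZMod p)) := by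
      funext B
      rw [Finset.prod_insert hℓ]
    rw [hrw, Finset.card_insert_of_notMem hℓ]
    exact mul_mem_span7 p n _ A L'.card _ ih

theorem stmt_7 (n p s : ℕ) (hp : p.Prime) (L : Finset ℕ)
    (hL : L ⊆ Finset.Icc 1 (p - 1)) (hLs : L.card = s)
    (F : Finset (Finset (Fin n)))
    (hF : ∀ A ∈ F, ∀ B ∈ F, A ≠ B → ∃ ℓ ∈ L, (A \ B).card ≡ ℓ [MOD p]) :
    F.card ≤ ∑ i ∈ Finset.range (s + 1), n.choose i := by
  classical
  haveI : Fact p.Prime := ⟨hp⟩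
  -- the polynomials
  set v : {A // A ∈ F} → (Finset (Fin n) → ZMod p) :=
    fun A B => ∏ ℓ ∈ L, (((A : Finset (Fin n)).card : ZMod p) - ℓ
      - (((A : Finset (Fin n)) ∩ B).card : ZMod p)) with hv
  -- cast facts
  have hcast : ∀ A B : Finset (Fin n),
      ((A.card : ZMod p) - ((A ∩ B).card : ZMod p)) = ((A \ B).card : ZMod p) := by
    intro A B
    have h := Finset.card_sdiff_add_card_inter A B
    have : ((A \ B).card : ZMod p) + ((A ∩ B).card : ZMod p) = (A.card : ZMod p) := by
      rw [← Nat.cast_add, h]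
    rw [← this]; ring
  have hLne : ∀ ℓ ∈ L, (ℓ : ZMod p) ≠ 0 := by
    intro ℓ hℓ
    have h := hL hℓ
    rw [Finset.mem_Icc] at h
    intro hc
    rw [ZMod.natCast_eq_zero_iff] at hc
    have := Nat.le_of_dvd (by omega) hc
    have hp2 := hp.two_le
    omega
  -- diagonal nonzero
  have hdiag : ∀ A : {A // A ∈ F}, v A (A : Finset (Fin n)) ≠ 0 := by
    intro A
    rw [hv]
    simp only
    rw [Finset.prod_ne_zero_iff]
    intro ℓ hℓ
    rw [Finset.inter_self, sub_sub, add_comm, ← sub_sub, sub_self, zero_sub]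
    exact neg_ne_zero.mpr (hLne ℓ hℓ)
  -- off-diagonal zero
  have hoff : ∀ A B : {A // A ∈ F}, A ≠ B → v A (B : Finset (Fin n)) = 0 := by
    intro A B hne
    have hne' : (A : Finset (Fin n)) ≠ (B : Finset (Fin n)) := by
      intro hc; exact hne (Subtype.ext hc)
    obtain ⟨ℓ, hℓL, hmod⟩ := hF A A.2 B B.2 hne'
    rw [hv]
    simp only
    apply Finset.prod_eq_zero hℓL
    rw [sub_sub, add_comm, ← sub_sub, hcast]
    rw [(ZMod.natCast_eq_natCast_iff _ _ _).mpr hmod, sub_self]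
  -- linear independence
  have hind : LinearIndependent (ZMod p) v := by
    rw [Fintype.linearIndependent_iff]
    intro g hg A
    have h0 : (∑ i, g i • v i) (A : Finset (Fin n)) = 0 := by rw [hg]; rfl
    rw [Finset.sum_apply] at h0
    simp only [Pi.smul_apply, smul_eq_mul] at h0
    have h1 : ∑ i, g i * v i (A : Finset (Fin n)) = g A * v A (A : Finset (Fin n)) := by
      rw [Finset.sum_eq_single A]
      · intro b _ hb
        rw [hoff b A hb, mul_zero]
      · intro h; exact absurd (Finset.mem_univ A) h
    rw [h1] at h0
    rcases mul_eq_zero.mp h0 with h | h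
    · exact h
    · exact absurd h (hdiag A)
  -- each v A lies in the span of low-degree monomials
  set M : Finset (Finset (Fin n)) := Finset.univ.filter (fun S => S.card ≤ s) with hM
  have hMeq : (mon7 p n '' {S | S.card ≤ s}) = (↑(M.image (mon7 p n)) : Set (Finset (Fin n) → ZMod p)) := by
    rw [Finset.coe_image]
    ext S
    simp only [hM, Finset.coe_filter, Finset.mem_univ, true_and, Set.mem_setOf_eq]
  have hvmem : ∀ A : {A // A ∈ F},
      v A ∈ Submodule.span (ZMod p) (↑(M.image (mon7 p n)) : Set (Finset (Fin n) → ZMod p)) := by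
    intro A
    rw [← hMeq, ← hLs]
    exact P_mem_span7 p n (A : Finset (Fin n)) L
  -- dimension count
  set W := Submodule.span (ZMod p) (↑(M.image (mon7 p n)) : Set (Finset (Fin n) → ZMod p)) with hW
  haveI : FiniteDimensional (ZMod p) W := by
    apply FiniteDimensional.span_of_finite
    exact (M.image (mon7 p n)).finite_toSet
  set v' : {A // A ∈ F} → W := fun A => ⟨v A, hvmem A⟩ with hv'
  have hind' : LinearIndependent (ZMod p) v' := by
    apply LinearIndependent.of_comp W.subtype
    exact hind
  have hcard1 : Fintype.card {A // A ∈ F} ≤ Module.finrank (ZMod p) W :=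
    hind'.fintype_card_le_finrank
  have hcard2 : Module.finrank (ZMod p) W ≤ (M.image (mon7 p n)).card :=
    finrank_span_finset_le_card _
  have hcard3 : (M.image (mon7 p n)).card ≤ M.card := Finset.card_image_le
  have hMcard : M.card ≤ ∑ i ∈ Finset.range (s + 1), n.choose i := by
    have hsub : M ⊆ (Finset.range (s + 1)).biUnion
        (fun i => Finset.powersetCard i (Finset.univ : Finset (Fin n))) := by
      intro S hS
      rw [Finset.mem_biUnion]
      refine ⟨S.card, ?_, ?_⟩
      · rw [Finset.mem_range, Nat.lt_succ_iff]
        simpa [hM] using hS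
      · rw [Finset.mem_powersetCard]
        exact ⟨Finset.subset_univ S, rfl⟩
    calc M.card ≤ _ := Finset.card_le_card hsub
      _ ≤ ∑ i ∈ Finset.range (s + 1),
            (Finset.powersetCard i (Finset.univ : Finset (Fin n))).card :=
          Finset.card_biUnion_le
      _ = ∑ i ∈ Finset.range (s + 1), n.choose i := by
          simp [Finset.card_powersetCard]
  have : F.card = Fintype.card {A // A ∈ F} := (Fintype.card_coe F).symm
  omega
end

section
/- Let p be a prime and L ⊆ {1,…,p−1} with |L| = s. If F ⊆ 2^[n] is a family such that for all distinct A, B ∈ F, |A \ B| is congruent modulo p to some element of L, then |F| ≤ Σ_{i=0}^{s} C(n−1, i). -/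
/-!
Polynomial method. Fix a point `i` and attach to each `A ∈ F` the function
`f_A(B) = ∏ ℓ ∈ L, (|(A \ {i}) \ B| - ℓ)` on the cube. It is a multilinear polynomial of degree
at most `s` in the `n - 1` variables other than `i`, so all `f_A` lie in a space of dimension
`∑ j ≤ s, C(n - 1, j)`. Deleting `i` from `A` changes nothing when `i ∈ B` or `i ∉ A`, so then
`f_A(B) = 0` for `B ≠ A`, while `f_A(A) = ∏ ℓ ∈ L, (-ℓ) ≠ 0`. Ordering `F` by whether `i ∈ A` makes
the evaluation matrix triangular, hence the `f_A` are linearly independent.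
-/

open Finset Submodule Module

theorem linearIndependent_of_eval_triangular {ι X K β : Type*} [Fintype ι] [Ring K]
    [NoZeroDivisors K] [LinearOrder β] (v : ι → X → K) (x : ι → X) (f : ι → β)
    (hdiag : ∀ a, v a (x a) ≠ 0) (hoff : ∀ a b, a ≠ b → f a ≤ f b → v a (x b) = 0) :
    LinearIndependent K v := by
  classical
  rw [Fintype.linearIndependent_iff]
  by_contra! ⟨g, hg, a, ha⟩
  obtain ⟨b, hb, hmax⟩ := (univ.filter (g · ≠ 0)).exists_max_image f ⟨a, by simpa using ha⟩
  have heval := congrFun hg (x b)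
  simp only [Finset.sum_apply, Pi.smul_apply, smul_eq_mul, Pi.zero_apply] at heval
  rw [Finset.sum_eq_single b (fun c _ hcb => ?_) (by simp)] at heval
  · exact mul_ne_zero (mem_filter.mp hb).2 (hdiag b) heval
  · by_cases hc : g c = 0
    · rw [hc, zero_mul]
    · rw [hoff c b hcb (hmax c (by simpa using hc)), mul_zero]

theorem card_filter_powerset_card_le {α : Type*} (E : Finset α) (d : ℕ) :
    #(E.powerset.filter (#· ≤ d)) = ∑ j ∈ range (d + 1), (#E).choose j := by
  rw [card_eq_sum_card_fiberwise (f := card) (t := range (d + 1)) (by intro T; simp)]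
  refine sum_congr rfl fun j hj => ?_
  rw [filter_filter, ← card_powersetCard, powersetCard_eq_filter]
  congr 1
  refine filter_congr fun T _ => ⟨And.right, ?_⟩
  rintro rfl
  exact ⟨Nat.lt_succ_iff.mp (mem_range.mp hj), rfl⟩

section CubeMonomial

variable {α : Type*} [DecidableEq α] (R : Type*) [CommRing R]

/-- Identifying `Finset α` with the cube `{0,1}^α`, this is the monomial `∏ j ∈ T, x j`. -/
def cubeMonomial (T : Finset α) : Finset α → R := fun B => if T ⊆ B then 1 else 0

def lowDegreeSpan (E : Finset α) (d : ℕ) : Submodule R (Finset α → R) :=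
  span R (Set.range fun T : E.powerset.filter (#· ≤ d) => cubeMonomial R T)

variable {R}

theorem cubeMonomial_empty : cubeMonomial R (∅ : Finset α) = 1 := by
  funext B
  simp [cubeMonomial]

theorem cubeMonomial_union (T U : Finset α) :
    cubeMonomial R (T ∪ U) = cubeMonomial R T * cubeMonomial R U := by
  funext B
  by_cases hT : T ⊆ B <;> by_cases hU : U ⊆ B <;> simp [cubeMonomial, union_subset_iff, hT, hU]

theorem cubeMonomial_mem_lowDegreeSpan {E T : Finset α} {d : ℕ} (hT : T ⊆ E) (hd : #T ≤ d) :
    cubeMonomial R T ∈ lowDegreeSpan R E d :=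
  subset_span ⟨⟨T, by simpa using ⟨hT, hd⟩⟩, rfl⟩

theorem lowDegreeSpan_mul_le (E : Finset α) (d e : ℕ) :
    lowDegreeSpan R E d * lowDegreeSpan R E e ≤ lowDegreeSpan R E (d + e) := by
  rw [lowDegreeSpan, lowDegreeSpan, span_mul_span, span_le]
  rintro _ ⟨_, ⟨⟨T, hT⟩, rfl⟩, _, ⟨⟨U, hU⟩, rfl⟩, rfl⟩
  simp only [mem_filter, mem_powerset] at hT hU
  change cubeMonomial R T * cubeMonomial R U ∈ lowDegreeSpan R E (d + e)
  rw [← cubeMonomial_union]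
  exact cubeMonomial_mem_lowDegreeSpan (union_subset hT.1 hU.1)
    ((card_union_le T U).trans (add_le_add hT.2 hU.2))

theorem prod_mem_lowDegreeSpan {ι : Type*} {E : Finset α} (s : Finset ι)
    {f : ι → Finset α → R} (hf : ∀ i ∈ s, f i ∈ lowDegreeSpan R E 1) :
    ∏ i ∈ s, f i ∈ lowDegreeSpan R E #s := by
  classical
  induction s using Finset.induction_on with
  | empty => simpa [cubeMonomial_empty] using
      cubeMonomial_mem_lowDegreeSpan (R := R) (empty_subset E) le_rfl
  | insert a s ha ih =>
    rw [prod_insert ha, card_insert_of_notMem ha, add_comm]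
    exact lowDegreeSpan_mul_le E 1 #s <| mul_mem_mul (hf a (mem_insert_self a s))
      (ih fun i hi => hf i (mem_insert_of_mem hi))

theorem card_sdiff_sub_eq_sum_cubeMonomial (A : Finset α) (c : R) :
    (fun B => (#(A \ B) : R) - c) =
      ∑ j ∈ A, (cubeMonomial R ∅ - cubeMonomial R {j}) - c • cubeMonomial R ∅ := by
  funext B
  simp only [sdiff_eq_filter, natCast_card_filter, Pi.sub_apply, Finset.sum_apply,
    Pi.smul_apply, cubeMonomial, empty_subset, singleton_subset_iff, if_true, smul_eq_mul, mul_one]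
  congr 1
  refine sum_congr rfl fun j _ => ?_
  split_ifs <;> simp

theorem card_sdiff_sub_mem_lowDegreeSpan {A E : Finset α} (hA : A ⊆ E) (c : R) :
    (fun B => (#(A \ B) : R) - c) ∈ lowDegreeSpan R E 1 := by
  have h0 : cubeMonomial R ∅ ∈ lowDegreeSpan R E 1 :=
    cubeMonomial_mem_lowDegreeSpan (empty_subset E) (by simp)
  rw [card_sdiff_sub_eq_sum_cubeMonomial]
  refine sub_mem (sum_mem fun j hj => sub_mem h0 ?_) (smul_mem _ c h0)
  exact cubeMonomial_mem_lowDegreeSpan (singleton_subset_iff.mpr (hA hj)) (by simp)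

theorem finrank_lowDegreeSpan_le [Nontrivial R] (E : Finset α) (d : ℕ) :
    finrank R (lowDegreeSpan R E d) ≤ ∑ j ∈ range (d + 1), (#E).choose j :=
  (finrank_range_le_card _).trans (by simp [card_filter_powerset_card_le])

end CubeMonomial

section DifferencingFamily

variable {α K : Type*} [DecidableEq α] [CommRing K]

def differencingPolynomial (L : Finset K) (i : α) (A : Finset α) : Finset α → K :=
  fun B => ∏ ℓ ∈ L, ((#(A.erase i \ B) : K) - ℓ)

theorem differencingPolynomial_mem_lowDegreeSpan [Fintype α] (L : Finset K) (i : α)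
    (A : Finset α) : differencingPolynomial L i A ∈ lowDegreeSpan K (univ.erase i) #L := by
  have h := prod_mem_lowDegreeSpan L fun ℓ _ =>
    card_sdiff_sub_mem_lowDegreeSpan (erase_subset_erase i (subset_univ A)) ℓ
  convert h using 1
  funext B
  simp [differencingPolynomial, Finset.prod_apply]

theorem differencingPolynomial_self_ne_zero [NoZeroDivisors K] [Nontrivial K] {L : Finset K}
    (hL : (0 : K) ∉ L) (i : α) (A : Finset α) : differencingPolynomial L i A A ≠ 0 := by
  rw [differencingPolynomial, sdiff_eq_empty_iff_subset.mpr (erase_subset i A)]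
  exact prod_ne_zero_iff.mpr fun ℓ hℓ => by
    simpa using fun h : ℓ = 0 => hL (h ▸ hℓ)

theorem differencingPolynomial_eq_zero {L : Finset K} {i : α} {A B : Finset α}
    (hAB : (#(A \ B) : K) ∈ L) (hi : i ∈ A → i ∈ B) : differencingPolynomial L i A B = 0 := by
  have : A.erase i \ B = A \ B := by
    ext j
    by_cases hj : j = i <;> simp_all
  exact prod_eq_zero hAB (by rw [this, sub_self])

end DifferencingFamily

theorem card_le_sum_choose_of_card_sdiff_mem {α K : Type*} [Fintype α] [DecidableEq α] [Field K]
    (L : Finset K) (hL : (0 : K) ∉ L) (F : Finset (Finset α))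
    (hF : ∀ A ∈ F, ∀ B ∈ F, A ≠ B → (#(A \ B) : K) ∈ L) :
    #F ≤ ∑ j ∈ range (#L + 1), (Fintype.card α - 1).choose j := by
  cases isEmpty_or_nonempty α with
  | inl _ =>
    calc #F ≤ 1 := card_le_one.mpr fun A _ B _ => by simp [eq_empty_of_isEmpty]
      _ = (Fintype.card α - 1).choose 0 := by simp
      _ ≤ _ := single_le_sum (fun _ _ => Nat.zero_le _) (by simp)
  | inr h =>
    obtain ⟨i⟩ := h
    let v : F → Finset α → K := fun A => differencingPolynomial L i A
    have hv : LinearIndependent K v :=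
      linearIndependent_of_eval_triangular v (↑) (fun A => i ∈ (A : Finset α))
        (fun A => differencingPolynomial_self_ne_zero hL i A)
        fun A B hAB hi => differencingPolynomial_eq_zero
          (hF A A.2 B B.2 (Subtype.coe_injective.ne hAB)) hi
    calc #F = finrank K (span K (Set.range v)) := by
          rw [finrank_span_eq_card hv, Fintype.card_coe]
      _ ≤ finrank K (lowDegreeSpan K (univ.erase i) #L) :=
        finrank_mono <| span_le.mpr <| Set.range_subset_iff.mpr fun A =>
          differencingPolynomial_mem_lowDegreeSpan L i A
      _ ≤ _ := by
        simpa [card_erase_of_mem] using finrank_lowDegreeSpan_le (R := K) (univ.erase i) #L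

theorem stmt_8 (n p s : ℕ) (hp : p.Prime) (L : Finset ℕ)
    (hL : L ⊆ Finset.Icc 1 (p - 1)) (hLs : L.card = s)
    (F : Finset (Finset (Fin n)))
    (hF : ∀ A ∈ F, ∀ B ∈ F, A ≠ B → ∃ ℓ ∈ L, (A \ B).card ≡ ℓ [MOD p]) :
    F.card ≤ ∑ i ∈ Finset.range (s + 1), (n - 1).choose i := by
  have : Fact p.Prime := ⟨hp⟩
  set L' : Finset (ZMod p) := L.image Nat.cast
  have hL' : (0 : ZMod p) ∉ L' := fun h => by
    obtain ⟨ℓ, hℓ, hℓp⟩ := mem_image.mp h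
    obtain ⟨hℓ1, hℓp1⟩ := mem_Icc.mp (hL hℓ)
    rw [ZMod.natCast_eq_zero_iff] at hℓp
    exact absurd (Nat.le_of_dvd hℓ1 hℓp) (by omega)
  have hF' : ∀ A ∈ F, ∀ B ∈ F, A ≠ B → (#(A \ B) : ZMod p) ∈ L' := fun A hA B hB hAB => by
    obtain ⟨ℓ, hℓ, hmod⟩ := hF A hA B hB hAB
    exact mem_image.mpr ⟨ℓ, hℓ, ((ZMod.natCast_eq_natCast_iff _ _ _).mpr hmod).symm⟩
  calc #F ≤ ∑ j ∈ range (#L' + 1), (n - 1).choose j := by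
        simpa using card_le_sum_choose_of_card_sdiff_mem L' hL' F hF'
    _ ≤ _ := sum_le_sum_of_subset <| range_subset_range.mpr <|
        hLs ▸ Nat.succ_le_succ card_image_le
end

section
/- Let q be a power of a prime p, and let L = {b−s+1, b−s+2, …, b} with s ≤ b < q. Assume p does not divide C(b, s). If F ⊆ 2^[n] is a family such that for all distinct A, B ∈ F, |A \ B| is congruent modulo q to some element of L, then |F| ≤ Σ_{i=0}^{s} C(n−1, i). -/
/-!
Fix a point `x`, put `N = b + p ^ m * |α|` and `W A B = C(N - |(A \ {x}) \ B|, s)` for `A, B ∈ F`.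
Modulo `p`, Lucas's theorem gives `W A A ≡ C(b, s) ≢ 0`, while for `A ≠ B` with `x ∈ A → x ∈ B`
we have `(A \ {x}) \ B = A \ B`, so `N - |A \ B| ≡ b - ℓ ∈ [0, s)` and `W A B ≡ 0`. Grouping `F`
by whether `x ∈ A` makes `W` block triangular with diagonal diagonal blocks, so `W` is invertible
over `ZMod p`. By Vandermonde's identity `W` factors through the indicators `B ↦ [T ⊆ B]` of the
sets `T ⊆ univ \ {x}` with `|T| ≤ s`, so `|F|` is at most their number.
-/

open Finset

theorem Choose.choose_modEq_choose_mod_pow_nat {n k p a : ℕ} [Fact p.Prime] (hk : k < p ^ a) :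
    n.choose k ≡ (n % p ^ a).choose k [MOD p] := by
  have hn := Choose.choose_modEq_choose_mul_prod_range_choose (n := n) (k := k) (p := p) a
  have hr := Choose.choose_modEq_choose_mul_prod_range_choose (n := n % p ^ a) (k := k) (p := p) a
  have hdigit : ∀ i ∈ range a, n % p ^ a / p ^ i % p = n / p ^ i % p := fun i hi => by
    rw [← Nat.sub_add_cancel (mem_range.1 hi).le, pow_add, mul_comm, Nat.mod_mul_right_div_self,
      Nat.mod_mod_of_dvd _ (dvd_pow_self p (by grind))]
  rw [Nat.div_eq_of_lt (Nat.mod_lt _ (pow_pos (Fact.out : p.Prime).pos a)),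
    prod_congr rfl fun i hi => by rw [hdigit i hi]] at hr
  rw [Nat.div_eq_of_lt hk, Nat.choose_zero_right] at hn hr
  rw [← Int.natCast_modEq_iff]
  exact hn.trans hr.symm

theorem Choose.choose_modEq_choose_of_modEq_pow {n n' k p a : ℕ} [Fact p.Prime] (hk : k < p ^ a)
    (h : n ≡ n' [MOD p ^ a]) : n.choose k ≡ n'.choose k [MOD p] := by
  have hn' := choose_modEq_choose_mod_pow_nat (n := n') hk
  rw [← h] at hn'
  exact (choose_modEq_choose_mod_pow_nat hk).trans hn'.symm

theorem Nat.prime_dvd_choose_sub_of_modEq {p m b s N u ℓ : ℕ} [Fact p.Prime] (hsb : s ≤ b)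
    (hbq : b < p ^ m) (hN : N ≡ b [MOD p ^ m]) (huN : u ≤ N) (hℓ : ℓ ∈ Icc (b - s + 1) b)
    (hu : u ≡ ℓ [MOD p ^ m]) : p ∣ (N - u).choose s := by
  rw [mem_Icc] at hℓ
  have hsum : N - u + ℓ ≡ b - ℓ + ℓ [MOD p ^ m] :=
    calc N - u + ℓ ≡ N - u + u [MOD p ^ m] := Nat.ModEq.add_left _ hu.symm
      _ = N := by omega
      _ ≡ b [MOD p ^ m] := hN
      _ = b - ℓ + ℓ := by omega
  have := Choose.choose_modEq_choose_of_modEq_pow (k := s) (by omega) (hsum.add_right_cancel' ℓ)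
  rwa [Nat.choose_eq_zero_of_lt (n := b - ℓ) (by omega), Nat.modEq_zero_iff_dvd] at this

theorem Matrix.det_ne_zero_of_twoBlockTriangular {ι R : Type*} [Fintype ι] [DecidableEq ι]
    [CommRing R] [IsDomain R] (M : Matrix ι ι R) (P : ι → Prop) [DecidablePred P]
    (hdiag : ∀ i, M i i ≠ 0) (hoff : ∀ i j, i ≠ j → (P i → P j) → M i j = 0) : M.det ≠ 0 := by
  have hblock : ∀ (Q : ι → Prop) [DecidablePred Q], (∀ i j, Q i → Q j → P i → P j) →
      (M.toSquareBlockProp Q).det ≠ 0 := by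
    intro Q _ hQ
    have : M.toSquareBlockProp Q = Matrix.diagonal fun i : {i // Q i} => M i i := by
      ext i j
      by_cases hij : i = j
      · subst hij; simp [Matrix.toSquareBlockProp]
      · rw [Matrix.diagonal_apply_ne _ hij]
        exact hoff i j (fun h => hij (Subtype.ext h)) (hQ i j i.2 j.2)
    rw [this, Matrix.det_diagonal]
    exact prod_ne_zero_iff.2 fun i _ => hdiag i
  rw [M.twoBlockTriangular_det P fun i hi j hj => hoff i j (by grind) (by grind)]
  exact mul_ne_zero (hblock P fun _ _ _ h _ => h) (hblock _ fun _ _ h _ h' => absurd h' h)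

theorem Matrix.card_le_card_of_det_mul_ne_zero {ι κ K : Type*} [Fintype ι] [Fintype κ]
    [DecidableEq ι] [Field K] (A : Matrix ι κ K) (B : Matrix κ ι K) (h : (A * B).det ≠ 0) :
    Fintype.card ι ≤ Fintype.card κ :=
  calc Fintype.card ι = (A * B).rank :=
        ((A * B).rank_of_isUnit ((A * B).isUnit_iff_isUnit_det.2 h.isUnit)).symm
    _ ≤ B.rank := Matrix.rank_mul_le_right A B
    _ ≤ Fintype.card κ := B.rank_le_card_height

section

variable {α : Type*}

theorem Finset.sum_powerset_filter_card_le {M : Type*} [AddCommMonoid M] (X : Finset α) (s : ℕ)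
    (f : ℕ → M) :
    ∑ T ∈ X.powerset with #T ≤ s, f #T = ∑ j ∈ range (s + 1), (#X).choose j • f j := by
  rw [← sum_fiberwise_of_maps_to (g := card) (t := range (s + 1))
      fun T hT => mem_range_succ_iff.2 (mem_filter.1 hT).2]
  refine sum_congr rfl fun j hj => ?_
  have hfiber : {T ∈ {T ∈ X.powerset | #T ≤ s} | #T = j} = powersetCard j X := by
    rw [filter_filter, powersetCard_eq_filter]
    exact filter_congr fun T _ => ⟨And.right, fun h => ⟨h ▸ mem_range_succ_iff.1 hj, h⟩⟩
  rw [sum_congr rfl fun T hT => by rw [(mem_filter.1 hT).2], sum_const, hfiber,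
    card_powersetCard]

theorem Finset.card_powerset_filter_card_le (X : Finset α) (s : ℕ) :
    #{T ∈ X.powerset | #T ≤ s} = ∑ j ∈ range (s + 1), (#X).choose j := by
  rw [card_eq_sum_ones, sum_powerset_filter_card_le X s fun _ => 1]
  simp

theorem Finset.sum_powerset_filter_card_le_choose (X : Finset α) (a s : ℕ) :
    ∑ T ∈ X.powerset with #T ≤ s, a.choose (s - #T) = (a + #X).choose s := by
  rw [sum_powerset_filter_card_le X s fun j => a.choose (s - j), add_comm a, Nat.add_choose_eq,
    Nat.sum_antidiagonal_eq_sum_range_succ fun i j => (#X).choose i * a.choose j]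
  simp only [smul_eq_mul, Nat.succ_eq_add_one]

variable [DecidableEq α]

/-- Vandermonde's identity for `C((N - |D|) + |D ∩ B|, s)`, where `C(|D ∩ B|, i)` counts the
`i`-subsets of `D` contained in `B`. -/
theorem Nat.choose_sub_card_sdiff_eq_sum {E D : Finset α} (B : Finset α) (hDE : D ⊆ E) {N : ℕ}
    (hDN : #D ≤ N) (s : ℕ) :
    (N - #(D \ B)).choose s = ∑ T ∈ E.powerset with #T ≤ s,
      (if T ⊆ D then (N - #D).choose (s - #T) else 0) * if T ⊆ B then 1 else 0 := by
  have hfilter :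
      {T ∈ {T ∈ E.powerset | #T ≤ s} | T ⊆ B ∩ D} = {T ∈ (B ∩ D).powerset | #T ≤ s} := by
    ext T
    simp only [mem_filter, mem_powerset]
    exact ⟨fun h => ⟨h.2, h.1.2⟩, fun h => ⟨⟨h.1.trans (inter_subset_right.trans hDE), h.2⟩, h.1⟩⟩
  simp_rw [mul_ite, mul_one, mul_zero, ← ite_and, ← subset_inter_iff]
  rw [← sum_filter, hfilter, sum_powerset_filter_card_le_choose]
  congr 1
  have := card_sdiff_add_card_inter D B
  rw [inter_comm] at this
  omega

theorem card_le_card_powerset_filter_of_modEq [Fintype α] (x : α) {p m b s : ℕ} [Fact p.Prime]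
    (hsb : s ≤ b) (hbq : b < p ^ m) (hchoose : ¬ p ∣ b.choose s) (F : Finset (Finset α))
    (hF : ∀ A ∈ F, ∀ B ∈ F, A ≠ B → ∃ ℓ ∈ Icc (b - s + 1) b, #(A \ B) ≡ ℓ [MOD p ^ m]) :
    #F ≤ #{T ∈ (univ.erase x).powerset | #T ≤ s} := by
  set N := b + p ^ m * Fintype.card α
  set 𝒯 := {T ∈ (univ.erase x).powerset | #T ≤ s}
  have hN : N ≡ b [MOD p ^ m] := Nat.add_mul_mod_self_left b (p ^ m) _
  have hcardN : ∀ A : Finset α, #A ≤ N := fun A =>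
    (card_le_univ A).trans <| (Nat.le_mul_of_pos_left _ (pow_pos (Fact.out : p.Prime).pos m)).trans
      (Nat.le_add_left _ b)
  let W : Matrix F F ℕ := Matrix.of fun A B => (N - #((A : Finset α).erase x \ B)).choose s
  let P : Matrix F 𝒯 ℕ := Matrix.of fun A T =>
    if (T : Finset α) ⊆ (A : Finset α).erase x then
      (N - #((A : Finset α).erase x)).choose (s - #(T : Finset α)) else 0
  let K : Matrix 𝒯 F ℕ := Matrix.of fun T B => if (T : Finset α) ⊆ B then 1 else 0
  have hWPK : W = P * K := by
    ext A B
    exact (Nat.choose_sub_card_sdiff_eq_sum B (erase_subset_erase x (subset_univ _))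
      (hcardN _) s).trans (sum_coe_sort 𝒯 _).symm
  have hdiag : ∀ A : F, W.map (Nat.castRingHom (ZMod p)) A A ≠ 0 := fun A => by
    have hmod := Choose.choose_modEq_choose_of_modEq_pow (k := s) (by omega) hN
    simp only [Matrix.map_apply, W, Matrix.of_apply, sdiff_eq_empty_iff_subset.2 (erase_subset x _),
      card_empty, Nat.sub_zero, Nat.coe_castRingHom]
    rwa [(ZMod.natCast_eq_natCast_iff _ _ _).2 hmod, ne_eq, ZMod.natCast_eq_zero_iff]
  have hoff : ∀ A B : F, A ≠ B → (x ∈ (A : Finset α) → x ∈ (B : Finset α)) →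
      W.map (Nat.castRingHom (ZMod p)) A B = 0 := fun A B hAB hx => by
    obtain ⟨ℓ, hℓ, hmod⟩ := hF A A.2 B B.2 (Subtype.coe_injective.ne hAB)
    have hsdiff : (A : Finset α).erase x \ B = (A : Finset α) \ (B : Finset α) := by
      ext y
      simp only [mem_sdiff, mem_erase]
      grind
    simp only [Matrix.map_apply, W, Matrix.of_apply, hsdiff, Nat.coe_castRingHom,
      ZMod.natCast_eq_zero_iff]
    exact Nat.prime_dvd_choose_sub_of_modEq hsb hbq hN (hcardN _) hℓ hmod
  have hdet :=
    Matrix.det_ne_zero_of_twoBlockTriangular _ (fun A : F => x ∈ (A : Finset α)) hdiag hoff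
  rw [hWPK, Matrix.map_mul] at hdet
  simpa using Matrix.card_le_card_of_det_mul_ne_zero _ _ hdet

end

theorem stmt_9 (n p q m b s : ℕ) (hp : p.Prime) (hq : q = p ^ m)
    (hsb : s ≤ b) (hbq : b < q) (hchoose : ¬ p ∣ Nat.choose b s)
    (F : Finset (Finset (Fin n)))
    (hF : ∀ A ∈ F, ∀ B ∈ F, A ≠ B →
      ∃ ℓ ∈ Finset.Icc (b - s + 1) b, (A \ B).card ≡ ℓ [MOD q]) :
    F.card ≤ ∑ i ∈ Finset.range (s + 1), (n - 1).choose i := by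
  have := Fact.mk hp
  subst hq
  rcases n.eq_zero_or_pos with rfl | hn
  · exact (card_le_one_of_subsingleton F).trans (by simp [sum_range_succ'])
  · calc #F ≤ #{T ∈ (univ.erase (⟨0, hn⟩ : Fin n)).powerset | #T ≤ s} :=
          card_le_card_powerset_filter_of_modEq _ hsb hbq hchoose F hF
      _ = ∑ i ∈ range (s + 1), (n - 1).choose i := by
          rw [card_powerset_filter_card_le, card_erase_of_mem (mem_univ _), card_univ,
            Fintype.card_fin]
end

section
/- Let q be a prime power and F ⊆ 2^[n] a family such that for all distinct A, B ∈ F, |A \ B| is not divisible by q. Then |F| ≤ Σ_{i=0}^{q−1} C(n−1, i). -/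
open Finset

namespace Stmt10Aux

variable {p : ℕ} [hp : Fact p.Prime]

private lemma lucas_cast (n k : ℕ) :
    ((n.choose k : ℕ) : ZMod p)
      = (((n % p).choose (k % p) : ℕ) : ZMod p) * (((n / p).choose (k / p) : ℕ) : ZMod p) := by
  have h := (ZMod.natCast_eq_natCast_iff _ _ p).mpr
    (Choose.choose_modEq_choose_mod_mul_choose_div_nat (n := n) (k := k) (p := p))
  push_cast at h
  exact h

/-- `p * y - 1 = p * (y-1) + (p-1)` for `y ≥ 1`. -/
private lemma rep_aux (y : ℕ) (hy : 0 < y) :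
    p * y - 1 = p * (y - 1) + (p - 1) := by
  obtain ⟨z, rfl⟩ : ∃ z, y = z + 1 := ⟨y - 1, by omega⟩
  rw [Nat.add_sub_cancel, Nat.mul_succ, Nat.add_sub_assoc hp.out.one_le]

private lemma mod_rep (x : ℕ) : (p * x + (p - 1)) % p = p - 1 := by
  rw [Nat.mul_add_mod, Nat.mod_eq_of_lt (by have := hp.out.two_le; omega)]

private lemma div_rep (x : ℕ) : (p * x + (p - 1)) / p = x := by
  rw [Nat.mul_add_div hp.out.pos, Nat.div_eq_of_lt (by have := hp.out.two_le; omega), Nat.add_zero]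

private lemma step1 (q m : ℕ) (hq : p ∣ q) (hq0 : 0 < q) (hm : ¬ p ∣ m) :
    (((m + q - 1).choose (q - 1) : ℕ) : ZMod p) = 0 := by
  have hp2 : 2 ≤ p := hp.out.two_le
  have hm0 : 0 < m := Nat.pos_of_ne_zero fun h => hm (h ▸ dvd_zero p)
  obtain ⟨t, rfl⟩ := hq
  have ht : 0 < t := by
    rcases Nat.eq_zero_or_pos t with h | h
    · subst h; simp at hq0
    · exact h
  have hr0 : m % p ≠ 0 := fun h => hm (Nat.dvd_of_mod_eq_zero h)
  have hrlt : m % p < p := Nat.mod_lt _ (by omega)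
  -- (m + p*t - 1) % p = m % p - 1
  have e1 : (m + p * t - 1) % p = m % p - 1 := by
    have h1 : m + p * t - 1 = (m - 1) + p * t := by
      rw [Nat.add_comm m (p * t), Nat.add_sub_assoc hm0, Nat.add_comm]
    rw [h1, Nat.add_mul_mod_self_left]
    have h2 : m - 1 = p * (m / p) + (m % p - 1) := by
      have h3 := Nat.div_add_mod m p
      have h4 : m % p - 1 + 1 = m % p := by omega
      calc m - 1 = p * (m / p) + m % p - 1 := by rw [h3]
        _ = p * (m / p) + (m % p - 1) := by
            rw [Nat.add_sub_assoc (by omega : 1 ≤ m % p)]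
    rw [h2, Nat.mul_add_mod, Nat.mod_eq_of_lt (by omega)]
  have e2 : (p * t - 1) % p = p - 1 := by
    rw [rep_aux t ht, mod_rep]
  rw [lucas_cast, e1, e2, Nat.choose_eq_zero_of_lt (by omega : m % p - 1 < p - 1)]
  simp

private lemma keyzero : ∀ k m : ℕ, ¬ p ^ (k + 1) ∣ m →
    (((m + p ^ (k + 1) - 1).choose (p ^ (k + 1) - 1) : ℕ) : ZMod p) = 0 := by
  intro k
  induction k with
  | zero =>
    intro m hm
    simpa using step1 p m dvd_rfl hp.out.pos (by simpa using hm)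
  | succ k ih =>
    intro m hm
    by_cases hpm : p ∣ m
    · obtain ⟨m', rfl⟩ := hpm
      have hQ : 0 < p ^ (k + 1) := pow_pos hp.out.pos _
      have hrw : p * m' + p ^ (k + 2) - 1 = p * (m' + p ^ (k + 1) - 1) + (p - 1) := by
        calc p * m' + p ^ (k + 2) - 1 = p * (m' + p ^ (k + 1)) - 1 := by
              rw [Nat.mul_add, pow_succ']
          _ = p * (m' + p ^ (k + 1) - 1) + (p - 1) := rep_aux _ (by omega)
      have hrw2 : p ^ (k + 2) - 1 = p * (p ^ (k + 1) - 1) + (p - 1) := by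
        calc p ^ (k + 2) - 1 = p * p ^ (k + 1) - 1 := by rw [pow_succ']
          _ = p * (p ^ (k + 1) - 1) + (p - 1) := rep_aux _ hQ
      rw [lucas_cast, hrw, hrw2, mod_rep, div_rep, mod_rep, div_rep, Nat.choose_self]
      have hm' : ¬ p ^ (k + 1) ∣ m' := by
        intro h
        exact hm (by rw [pow_succ']; exact Nat.mul_dvd_mul_left p h)
      rw [ih m' hm']
      simp
    · exact step1 _ m (dvd_pow_self p (Nat.succ_ne_zero (k + 1))) (pow_pos hp.out.pos _) hpm

private lemma decomp {γ : Type*} [DecidableEq γ] (q : ℕ) (hq : 1 ≤ q) (u : Finset γ) :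
    u.powerset.filter (fun S => S.card ≤ q - 1)
      = (Finset.range q).biUnion (fun i => Finset.powersetCard i u) := by
  ext S
  simp only [Finset.mem_filter, Finset.mem_powerset, Finset.mem_biUnion, Finset.mem_range,
    Finset.mem_powersetCard]
  constructor
  · rintro ⟨h1, h2⟩; exact ⟨S.card, by omega, h1, rfl⟩
  · rintro ⟨i, hi, h1, rfl⟩; exact ⟨h1, by omega⟩

private lemma card_count {γ : Type*} [DecidableEq γ] (q : ℕ) (hq : 1 ≤ q) (u : Finset γ) :
    (u.powerset.filter (fun S => S.card ≤ q - 1)).card = ∑ i ∈ Finset.range q, u.card.choose i := by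
  rw [decomp q hq u, Finset.card_biUnion
    (fun i _ j _ hij => Finset.pairwise_disjoint_powersetCard u hij)]
  exact Finset.sum_congr rfl fun i _ => Finset.card_powersetCard i u

private lemma nat_identity {γ : Type*} [DecidableEq γ] (q : ℕ) (hq : 1 ≤ q) (D : Finset γ) :
    ∑ S ∈ D.powerset.filter (fun S => S.card ≤ q - 1), (q - 1).choose (q - 1 - S.card)
      = (D.card + q - 1).choose (q - 1) := by
  rw [decomp q hq D, Finset.sum_biUnion
    ((Finset.pairwise_disjoint_powersetCard D).set_pairwise _)]
  have h1 : ∀ i ∈ Finset.range q, ∑ S ∈ Finset.powersetCard i D, (q - 1).choose (q - 1 - S.card)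
      = D.card.choose i * (q - 1).choose (q - 1 - i) := by
    intro i _
    rw [Finset.sum_congr rfl (fun S hS => by
      rw [(Finset.mem_powersetCard.mp hS).2]), Finset.sum_const, Finset.card_powersetCard,
      smul_eq_mul]
  rw [Finset.sum_congr rfl h1]
  have hv := Nat.add_choose_eq D.card (q - 1) (q - 1)
  rw [Finset.Nat.sum_antidiagonal_eq_sum_range_succ_mk] at hv
  simp only [Nat.succ_eq_add_one] at hv
  rw [show q - 1 + 1 = q by omega] at hv
  rw [show D.card + q - 1 = D.card + (q - 1) by omega, hv]

private lemma pascal_sum (n q : ℕ) (hn : 0 < n) (hq : 0 < q) :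
    ∑ i ∈ Finset.range q, n.choose i
      = ∑ i ∈ Finset.range q, (n - 1).choose i + ∑ i ∈ Finset.range (q - 1), (n - 1).choose i := by
  obtain ⟨m, rfl⟩ : ∃ m, n = m + 1 := ⟨n - 1, by omega⟩
  obtain ⟨r, rfl⟩ : ∃ r, q = r + 1 := ⟨q - 1, by omega⟩
  simp only [Nat.add_sub_cancel]
  rw [Finset.sum_range_succ' (fun i => (m + 1).choose i) r,
      Finset.sum_range_succ' (fun i => m.choose i) r]
  simp only [Nat.choose_succ_succ, Nat.choose_zero_right]
  rw [Finset.sum_add_distrib]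
  ring

private def eS (p : ℕ) {n : ℕ} (S B : Finset (Fin n)) : ZMod p :=
  if Disjoint S B then 1 else 0

private def fA (p q : ℕ) {n : ℕ} (A B : Finset (Fin n)) : ZMod p :=
  ((((A \ B).card + q - 1).choose (q - 1) : ℕ) : ZMod p)

private lemma fA_expand (q : ℕ) (hq : 1 ≤ q) {n : ℕ} (A : Finset (Fin n)) :
    fA p q A = ∑ S ∈ A.powerset.filter (fun S => S.card ≤ q - 1),
      (((q - 1).choose (q - 1 - S.card) : ℕ) : ZMod p) • eS p S := by
  funext B
  rw [Finset.sum_apply]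
  simp only [Pi.smul_apply, eS, smul_eq_mul, mul_ite, mul_one, mul_zero]
  rw [← Finset.sum_filter]
  have hset : ((A.powerset.filter (fun S => S.card ≤ q - 1)).filter (fun S => Disjoint S B))
      = (A \ B).powerset.filter (fun S => S.card ≤ q - 1) := by
    ext S
    simp only [Finset.mem_filter, Finset.mem_powerset, Finset.subset_sdiff]
    tauto
  rw [hset, ← Nat.cast_sum, nat_identity q hq (A \ B)]
  rfl

set_option maxHeartbeats 2000000 in
private lemma main_bound (p k n : ℕ) [hp : Fact p.Prime] (hk : 0 < k) (hn : 0 < n)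
    (F : Finset (Finset (Fin n)))
    (hF : ∀ A ∈ F, ∀ B ∈ F, A ≠ B → ¬ p ^ k ∣ (A \ B).card) :
    F.card + ∑ i ∈ Finset.range (p ^ k - 1), (n - 1).choose i
      ≤ ∑ i ∈ Finset.range (p ^ k), n.choose i := by
  classical
  obtain ⟨q, hqdef⟩ : ∃ q, q = p ^ k := ⟨_, rfl⟩
  rw [← hqdef] at hF ⊢
  have hq2 : 2 ≤ q := by
    have h1 : p ^ 1 ≤ p ^ k := Nat.pow_le_pow_right hp.out.pos hk
    have := hp.out.two_le
    rw [pow_one] at h1; omega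
  set z : Fin n := ⟨0, hn⟩ with hz
  -- delta property
  have hdelta : ∀ A ∈ F, ∀ B ∈ F, fA p q A B = if A = B then 1 else 0 := by
    intro A hA B hB
    by_cases h : A = B
    · subst h
      simp [fA, Finset.sdiff_self]
    · rw [if_neg h]
      have hm := hF A hA B hB h
      obtain ⟨k', rfl⟩ : ∃ k', k = k' + 1 := ⟨k - 1, by omega⟩
      show ((((A \ B).card + q - 1).choose (q - 1) : ℕ) : ZMod p) = 0
      rw [hqdef] at hm ⊢
      exact keyzero k' _ hm
  set 𝒮 : Finset (Finset (Fin n)) :=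
    (Finset.univ : Finset (Fin n)).powerset.filter (fun S => S.card ≤ q - 1) with hSdef
  set 𝒯 : Finset (Finset (Fin n)) :=
    (((Finset.univ : Finset (Fin n)).erase z).powerset.filter
        (fun S => S.card ≤ q - 1 - 1)).image (insert z) with hTdef
  have hTmem : ∀ T ∈ 𝒯, z ∈ T ∧ T.card ≤ q - 1 := by
    intro T hTm
    rw [hTdef, Finset.mem_image] at hTm
    obtain ⟨S, hSmem, rfl⟩ := hTm
    rw [Finset.mem_filter, Finset.mem_powerset] at hSmem
    have hzS : z ∉ S := fun hzS => (Finset.mem_erase.mp (hSmem.1 hzS)).1 rfl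
    refine ⟨Finset.mem_insert_self _ _, ?_⟩
    rw [Finset.card_insert_of_notMem hzS]
    omega
  have hTS : 𝒯 ⊆ 𝒮 := by
    intro T hTm
    rw [hSdef, Finset.mem_filter, Finset.mem_powerset]
    exact ⟨Finset.subset_univ _, (hTmem T hTm).2⟩
  -- the linearly independent family
  let v : (↥F ⊕ ↥𝒯) → (Finset (Fin n) → ZMod p) :=
    Sum.elim (fun A => fA p q (↑A : Finset (Fin n))) (fun T => eS p (↑T : Finset (Fin n)))
  have hindep : LinearIndependent (ZMod p) v := by
    rw [Fintype.linearIndependent_iff]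
    intro g hg
    rw [Fintype.sum_sum_type] at hg
    simp only [Finset.univ_eq_attach, Sum.elim_inl, Sum.elim_inr, v] at hg
    have heval : ∀ B : Finset (Fin n),
        (∑ a ∈ F.attach, g (Sum.inl a) * fA p q (↑a : Finset (Fin n)) B)
          + (∑ t ∈ 𝒯.attach, g (Sum.inr t) * eS p (↑t : Finset (Fin n)) B) = 0 := by
      intro B
      have h := congrFun hg B
      simpa [Finset.sum_apply, smul_eq_mul] using h
    -- Stage 1: coefficients of A ∋ z vanish
    have stage1 : ∀ a : ↥F, z ∈ (↑a : Finset (Fin n)) → g (Sum.inl a) = 0 := by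
      intro a hza
      have h := heval ↑a
      have h2 : ∀ t ∈ 𝒯.attach, g (Sum.inr t) * eS p (↑t : Finset (Fin n)) ↑a = 0 := by
        intro t _
        have hzt := (hTmem ↑t t.2).1
        have hnd : ¬ Disjoint (↑t : Finset (Fin n)) (↑a : Finset (Fin n)) :=
          fun hd => (Finset.disjoint_left.mp hd hzt) hza
        simp [eS, hnd]
      rw [Finset.sum_eq_zero h2, add_zero] at h
      have h0 : ∀ b ∈ F.attach, b ≠ a → g (Sum.inl b) * fA p q (↑b : Finset (Fin n)) ↑a = 0 := by
        intro b _ hba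
        rw [hdelta ↑b b.2 ↑a a.2, if_neg (fun hh => hba (Subtype.ext hh)), mul_zero]
      have h1 : a ∉ F.attach → g (Sum.inl a) * fA p q (↑a : Finset (Fin n)) ↑a = 0 :=
        fun hna => absurd (Finset.mem_attach F a) hna
      rw [Finset.sum_eq_single a h0 h1, hdelta ↑a a.2 ↑a a.2, if_pos rfl, mul_one] at h
      exact h
    -- Stage 2: all F-coefficients vanish
    have stage2 : ∀ a : ↥F, g (Sum.inl a) = 0 := by
      intro a
      by_cases hza : z ∈ (↑a : Finset (Fin n))
      · exact stage1 a hza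
      · have h := heval (insert z ↑a)
        have h2 : ∀ t ∈ 𝒯.attach, g (Sum.inr t) * eS p (↑t : Finset (Fin n)) (insert z ↑a) = 0 := by
          intro t _
          have hzt := (hTmem ↑t t.2).1
          have hnd : ¬ Disjoint (↑t : Finset (Fin n)) (insert z ↑a) :=
            fun hd => (Finset.disjoint_left.mp hd hzt) (Finset.mem_insert_self z _)
          simp [eS, hnd]
        rw [Finset.sum_eq_zero h2, add_zero] at h
        have h0 : ∀ b ∈ F.attach, b ≠ a → g (Sum.inl b) * fA p q (↑b : Finset (Fin n)) (insert z ↑a) = 0 := by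
          intro b _ hba
          by_cases hzb : z ∈ (↑b : Finset (Fin n))
          · rw [stage1 b hzb, zero_mul]
          · have hsd : (↑b : Finset (Fin n)) \ insert z ↑a = ↑b \ ↑a := by
              rw [Finset.sdiff_insert, Finset.erase_eq_of_notMem
                (fun hzz => hzb (Finset.mem_sdiff.mp hzz).1)]
            have hfb : fA p q (↑b : Finset (Fin n)) (insert z ↑a) = fA p q (↑b : Finset (Fin n)) ↑a := by
              show ((((↑b \ insert z ↑a : Finset (Fin n)).card + q - 1).choose (q - 1) : ℕ) : ZMod p) = _
              rw [hsd]
              rfl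
            rw [hfb, hdelta ↑b b.2 ↑a a.2,
              if_neg (fun hh => hba (Subtype.ext hh)), mul_zero]
        have h1 : a ∉ F.attach → g (Sum.inl a) * fA p q (↑a : Finset (Fin n)) (insert z ↑a) = 0 :=
          fun hna => absurd (Finset.mem_attach F a) hna
        rw [Finset.sum_eq_single a h0 h1] at h
        have hsd : (↑a : Finset (Fin n)) \ insert z ↑a = (↑a : Finset (Fin n)) \ ↑a := by
          rw [Finset.sdiff_insert, Finset.erase_eq_of_notMem
            (fun hzz => hza (Finset.mem_sdiff.mp hzz).1)]
        have hfa : fA p q (↑a : Finset (Fin n)) (insert z ↑a) = 1 := by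
          show ((((↑a \ insert z ↑a : Finset (Fin n)).card + q - 1).choose (q - 1) : ℕ) : ZMod p) = 1
          rw [hsd]
          simp [Finset.sdiff_self]
        rw [hfa, mul_one] at h
        exact h
    -- Stage 3: the 𝒯-coefficients vanish
    have hg2 : ∀ B, (∑ t ∈ 𝒯.attach, g (Sum.inr t) * eS p (↑t : Finset (Fin n)) B) = 0 := by
      intro B
      have h := heval B
      rw [Finset.sum_eq_zero (fun a _ => by rw [stage2 a, zero_mul]), zero_add] at h
      exact h
    have stage3 : ∀ m : ℕ, ∀ t : ↥𝒯, (↑t : Finset (Fin n)).card = m → g (Sum.inr t) = 0 := by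
      intro m
      induction m using Nat.strong_induction_on with
      | _ m ih =>
        intro t htc
        have h := hg2 ((↑t : Finset (Fin n))ᶜ)
        have h0 : ∀ b ∈ 𝒯.attach, b ≠ t → g (Sum.inr b) * eS p (↑b : Finset (Fin n)) ((↑t : Finset (Fin n))ᶜ) = 0 := by
          intro b _ hbt
          by_cases hsub : (↑b : Finset (Fin n)) ⊆ ↑t
          · have hss : (↑b : Finset (Fin n)) ⊂ ↑t :=
              lt_of_le_of_ne hsub (fun hh => hbt (Subtype.ext hh))
            have hcard : (↑b : Finset (Fin n)).card < m := htc ▸ Finset.card_lt_card hss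
            rw [ih _ hcard b rfl, zero_mul]
          · have he0 : eS p (↑b : Finset (Fin n)) ((↑t : Finset (Fin n))ᶜ) = 0 := by
              simp only [eS, if_neg (fun hd => hsub (disjoint_compl_right_iff.mp hd))]
            rw [he0, mul_zero]
        have h1 : t ∉ 𝒯.attach → g (Sum.inr t) * eS p (↑t : Finset (Fin n)) ((↑t : Finset (Fin n))ᶜ) = 0 :=
          fun hna => absurd (Finset.mem_attach 𝒯 t) hna
        rw [Finset.sum_eq_single t h0 h1] at h
        have he1 : eS p (↑t : Finset (Fin n)) ((↑t : Finset (Fin n))ᶜ) = 1 := by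
          simp [eS, disjoint_compl_right_iff.mpr (le_refl (↑t : Finset (Fin n)))]
        rw [he1, mul_one] at h
        exact h
    rintro (a | t)
    · exact stage2 a
    · exact stage3 _ t rfl
  -- span condition
  have hspan : Set.range v ≤
      ↑(Submodule.span (ZMod p) ((𝒮.image (eS p) : Finset _) : Set (Finset (Fin n) → ZMod p))) := by
    rintro _ ⟨i, rfl⟩
    match i with
    | Sum.inl a =>
      show fA p q (↑a : Finset (Fin n)) ∈ Submodule.span (ZMod p) _
      rw [fA_expand q (by omega) (↑a : Finset (Fin n))]
      apply Submodule.sum_mem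
      intro S hSm
      apply Submodule.smul_mem
      apply Submodule.subset_span
      rw [Finset.coe_image]
      refine Set.mem_image_of_mem _ ?_
      rw [Finset.mem_coe, hSdef, Finset.mem_filter, Finset.mem_powerset]
      rw [Finset.mem_filter] at hSm
      exact ⟨Finset.subset_univ _, hSm.2⟩
    | Sum.inr t =>
      show eS p (↑t : Finset (Fin n)) ∈ Submodule.span (ZMod p) _
      apply Submodule.subset_span
      rw [Finset.coe_image]
      exact Set.mem_image_of_mem _ (Finset.mem_coe.mpr (hTS t.2))
  have hcard := linearIndependent_le_span_aux' v hindep _ hspan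
  simp only [Fintype.card_sum, Fintype.card_coe, Finset.coe_sort_coe] at hcard
  have hScard : 𝒮.card = ∑ i ∈ Finset.range q, n.choose i := by
    rw [hSdef, card_count q (by omega)]
    simp [Finset.card_univ]
  have hTcard : 𝒯.card = ∑ i ∈ Finset.range (q - 1), (n - 1).choose i := by
    rw [hTdef, Finset.card_image_of_injOn ?_]
    · rw [card_count (q - 1) (by omega)]
      congr 1
      rw [Finset.card_erase_of_mem (Finset.mem_univ z), Finset.card_univ, Fintype.card_fin]
    · intro S1 h1 S2 h2 hins
      simp only [Finset.coe_filter, Set.mem_setOf_eq, Finset.mem_powerset] at h1 h2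
      have hz1 : z ∉ S1 := fun hh => (Finset.mem_erase.mp (h1.1 hh)).1 rfl
      have hz2 : z ∉ S2 := fun hh => (Finset.mem_erase.mp (h2.1 hh)).1 rfl
      rw [← Finset.erase_insert hz1, hins, Finset.erase_insert hz2]
  calc F.card + ∑ i ∈ Finset.range (q - 1), (n - 1).choose i
      = F.card + 𝒯.card := by rw [hTcard]
    _ ≤ (𝒮.image (eS p)).card := hcard
    _ ≤ 𝒮.card := Finset.card_image_le
    _ = ∑ i ∈ Finset.range q, n.choose i := hScard

end Stmt10Aux

theorem stmt_10 (n q : ℕ) (hq : IsPrimePow q)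
    (F : Finset (Finset (Fin n)))
    (hF : ∀ A ∈ F, ∀ B ∈ F, A ≠ B → ¬ q ∣ (A \ B).card) :
    F.card ≤ ∑ i ∈ Finset.range q, (n - 1).choose i := by
  obtain ⟨p, k, hpp, hk, rfl⟩ := hq
  have hp : Nat.Prime p := hpp.nat_prime
  haveI : Fact p.Prime := ⟨hp⟩
  rcases Nat.eq_zero_or_pos n with hn | hn
  · subst hn
    have h1 : F.card ≤ 1 := by
      have h := Finset.card_le_univ F
      simpa [Fintype.card_finset] using h
    have h0 : (0 : ℕ) ∈ Finset.range (p ^ k) := Finset.mem_range.mpr (pow_pos hp.pos k)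
    have h2 : 1 ≤ ∑ i ∈ Finset.range (p ^ k), (0 - 1 : ℕ).choose i := by
      calc (1 : ℕ) = (0 - 1 : ℕ).choose 0 := by simp
        _ ≤ _ := Finset.single_le_sum (fun i _ => Nat.zero_le _) h0
    omega
  · have key := Stmt10Aux.main_bound p k n hk hn F hF
    have pas := Stmt10Aux.pascal_sum n (p ^ k) hn (pow_pos hp.pos k)
    omega
end

section
/- Let q = p^k be a prime power and L ⊆ {1,…,q−1} with Σ_{ℓ∈L} v_p(ℓ) < k. If F ⊆ 2^[n] is a family such that for all distinct A, B ∈ F, |A \ B| is congruent modulo q to some element of L, then |F| ≤ Σ_{i=0}^{|L|} C(n, i). -/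
open Finset Submodule

namespace Stmt11Aux

variable {n : ℕ}

/-- Indicator "monomial": 1 if `T ⊆ S`. -/
noncomputable def eT (T : Finset (Fin n)) : Finset (Fin n) → ℚ :=
  fun S => if T ⊆ S then 1 else 0

/-- Span of monomials of degree at most `d`. -/
noncomputable def Wd (n d : ℕ) : Submodule ℚ (Finset (Fin n) → ℚ) :=
  Submodule.span ℚ (eT '' {T : Finset (Fin n) | T.card ≤ d})

lemma eT_mem {d : ℕ} {T : Finset (Fin n)} (hT : T.card ≤ d) : eT T ∈ Wd n d :=
  subset_span ⟨T, hT, rfl⟩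

lemma step (A : Finset (Fin n)) (a : ℚ) (T : Finset (Fin n)) {d : ℕ} (hT : T.card ≤ d) :
    (fun S => (((A \ S).card : ℚ) - a)) * eT T ∈ Wd n (d + 1) := by
  classical
  have heq : (fun S => (((A \ S).card : ℚ) - a)) * eT T
      = ((A.card : ℚ) - a) • eT T - ∑ i ∈ A, eT (insert i T) := by
    funext S
    simp only [Pi.mul_apply, Pi.smul_apply, Pi.sub_apply, Finset.sum_apply, smul_eq_mul, eT]
    by_cases hTS : T ⊆ S
    · simp only [hTS, if_true, mul_one]
      have h1 : ∀ i ∈ A, (if insert i T ⊆ S then (1:ℚ) else 0) = if i ∈ S then 1 else 0 := by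
        intro i _
        by_cases hi : i ∈ S <;> simp [Finset.insert_subset_iff, hi, hTS]
      rw [Finset.sum_congr rfl h1]
      have h2 : ∑ i ∈ A, (if i ∈ S then (1:ℚ) else 0) = ((A ∩ S).card : ℚ) := by
        rw [← Finset.filter_mem_eq_inter, Finset.card_filter]
        push_cast
        rfl
      have h3 : (A \ S).card + (A ∩ S).card = A.card := Finset.card_sdiff_add_card_inter A S
      rw [h2]
      have h4 : ((A \ S).card : ℚ) + ((A ∩ S).card : ℚ) = (A.card : ℚ) := by exact_mod_cast congrArg (Nat.cast : ℕ → ℚ) h3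
      linarith
    · simp only [hTS, if_false, mul_zero]
      have h1 : ∀ i ∈ A, (if insert i T ⊆ S then (1:ℚ) else 0) = 0 := by
        intro i _
        have : ¬ insert i T ⊆ S := fun h => hTS ((Finset.subset_insert i T).trans h)
        simp [this]
      rw [Finset.sum_congr rfl h1]
      simp
  rw [heq]
  refine Submodule.sub_mem _ (Submodule.smul_mem _ _ (eT_mem (hT.trans (Nat.le_succ _))))
    (Submodule.sum_mem _ fun i _ => eT_mem ?_)
  exact (Finset.card_insert_le i T).trans (Nat.succ_le_succ hT)

lemma mem_Wd (A : Finset (Fin n)) (L' : Finset ℕ) :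
    (fun S => ∏ ℓ ∈ L', (((A \ S).card : ℚ) - (ℓ : ℚ))) ∈ Wd n L'.card := by
  classical
  induction L' using Finset.cons_induction with
  | empty =>
    have h : (fun S : Finset (Fin n) => ∏ ℓ ∈ (∅ : Finset ℕ), (((A \ S).card : ℚ) - (ℓ:ℚ)))
        = eT (∅ : Finset (Fin n)) := by
      funext S; simp [eT]
    rw [show (∅ : Finset ℕ).card = 0 from rfl, h]
    exact eT_mem le_rfl
  | cons a L' ha ih =>
    have hmap : Wd n L'.card ≤ Submodule.comap
        (LinearMap.mulLeft ℚ (fun S => (((A \ S).card : ℚ) - (a:ℚ)))) (Wd n (L'.card + 1)) := by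
      rw [Wd, Submodule.span_le]
      rintro x ⟨T, hT, rfl⟩
      exact step A (a:ℚ) T hT
    have hmem := hmap ih
    simp only [Submodule.mem_comap, LinearMap.mulLeft_apply] at hmem
    have hcard : (Finset.cons a L' ha).card = L'.card + 1 := Finset.card_cons ha
    have hfun : (fun S => ∏ ℓ ∈ Finset.cons a L' ha, (((A \ S).card : ℚ) - (ℓ:ℚ)))
        = (fun S => (((A \ S).card : ℚ) - (a:ℚ))) * (fun S => ∏ ℓ ∈ L', (((A \ S).card : ℚ) - (ℓ:ℚ))) := by
      funext S; rw [Finset.prod_cons]; rfl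
    rw [hcard, hfun]
    exact hmem

lemma padicNorm_prod {p : ℕ} [Fact p.Prime] {α : Type*} (s : Finset α) (f : α → ℚ) :
    padicNorm p (∏ i ∈ s, f i) = ∏ i ∈ s, padicNorm p (f i) := by
  classical
  induction s using Finset.cons_induction with
  | empty => simp [padicNorm.one]
  | cons a s ha ih => rw [Finset.prod_cons, Finset.prod_cons, padicNorm.mul, ih]

end Stmt11Aux

theorem stmt_11 (n p k q : ℕ) (hp : p.Prime) (hq : q = p ^ k)
    (L : Finset ℕ) (hL : L ⊆ Finset.Icc 1 (q - 1))
    (hval : ∑ ℓ ∈ L, padicValNat p ℓ < k)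
    (F : Finset (Finset (Fin n)))
    (hF : ∀ A ∈ F, ∀ B ∈ F, A ≠ B → ∃ ℓ ∈ L, (A \ B).card ≡ ℓ [MOD q]) :
    F.card ≤ ∑ i ∈ Finset.range (L.card + 1), n.choose i := by
  classical
  haveI : Fact p.Prime := ⟨hp⟩
  open Stmt11Aux in
  -- the polynomial functions
  set f : Finset (Fin n) → (Finset (Fin n) → ℚ) :=
    fun A S => ∏ ℓ ∈ L, (((A \ S).card : ℚ) - (ℓ : ℚ)) with hf
  have hLpos : ∀ ℓ ∈ L, 1 ≤ ℓ := fun ℓ hℓ => (Finset.mem_Icc.mp (hL hℓ)).1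
  -- values are casts of integers divisible properties
  have hcast : ∀ A S : Finset (Fin n),
      f A S = ((∏ ℓ ∈ L, (((A \ S).card : ℤ) - (ℓ:ℤ)) : ℤ) : ℚ) := by
    intro A S; rw [hf]; push_cast; rfl
  -- norm of the diagonal value
  have hdiag : ∀ A : Finset (Fin n), (p:ℚ) ^ (-(k:ℤ)) < padicNorm p (f A A) := by
    intro A
    have hAA : f A A = ∏ ℓ ∈ L, ((0:ℚ) - (ℓ:ℚ)) := by
      rw [hf]; simp
    set N : ℕ := ∏ ℓ ∈ L, ℓ with hN
    have hNne : N ≠ 0 := by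
      rw [hN]
      exact Finset.prod_ne_zero_iff.mpr fun ℓ hℓ => Nat.one_le_iff_ne_zero.mp (hLpos ℓ hℓ)
    have hnormN : padicNorm p (f A A) = padicNorm p ((N:ℤ) : ℚ) := by
      rw [hAA, Stmt11Aux.padicNorm_prod]
      have : padicNorm p ((N:ℤ):ℚ) = padicNorm p ((N:ℕ):ℚ) := by push_cast; rfl
      rw [this, hN]
      push_cast
      rw [Stmt11Aux.padicNorm_prod]
      exact Finset.prod_congr rfl fun ℓ _ => by rw [zero_sub, padicNorm.neg]
    rw [hnormN]
    -- not divisible by p^k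
    have hnotdvd : ¬ (((p ^ k : ℕ) : ℤ) ∣ (N:ℤ)) := by
      rw [Int.natCast_dvd_natCast]
      intro hdvd
      have hfac := (Nat.Prime.pow_dvd_iff_le_factorization hp hNne).mp hdvd
      have : N.factorization p = ∑ ℓ ∈ L, padicValNat p ℓ := by
        rw [hN, Nat.factorization_prod (fun ℓ hℓ => Nat.one_le_iff_ne_zero.mp (hLpos ℓ hℓ))]
        rw [Finsupp.finset_sum_apply]
        exact Finset.sum_congr rfl fun ℓ hℓ => Nat.factorization_def ℓ hp
      rw [this] at hfac
      omega
    have := (not_iff_not.mpr (padicNorm.dvd_iff_norm_le (p := p) (n := k) (z := (N:ℤ)))).mp hnotdvd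
    exact lt_of_not_ge this
  -- off-diagonal values are divisible by q
  have hoff : ∀ A ∈ F, ∀ B ∈ F, B ≠ A → padicNorm p (f B A) ≤ (p:ℚ) ^ (-(k:ℤ)) := by
    intro A hA B hB hBA
    obtain ⟨ℓ0, hℓ0L, hmod⟩ := hF B hB A hA hBA
    have hdvd : ((p ^ k : ℕ) : ℤ) ∣ ∏ ℓ ∈ L, (((B \ A).card : ℤ) - (ℓ:ℤ)) := by
      have h1 : (q:ℤ) ∣ (((B \ A).card : ℤ) - (ℓ0:ℤ)) := by
        exact dvd_sub_comm.mp ((Nat.modEq_iff_dvd).mp hmod)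
      rw [← hq]
      exact dvd_trans h1 (Finset.dvd_prod_of_mem _ hℓ0L)
    rw [hcast]
    exact (padicNorm.dvd_iff_norm_le (p := p)).mp hdvd
  -- linear independence
  have hLI : LinearIndependent ℚ (fun A : {x // x ∈ F} => f A.1) := by
    rw [Fintype.linearIndependent_iff]
    intro g hg
    by_contra hne
    push_neg at hne
    obtain ⟨A0, hA0⟩ := hne
    obtain ⟨A, -, hmax⟩ := Finset.exists_max_image Finset.univ
      (fun B : {x // x ∈ F} => padicNorm p (g B)) ⟨A0, Finset.mem_univ _⟩
    have hgA : g A ≠ 0 := by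
      intro h
      apply hA0
      have h1 : padicNorm p (g A0) ≤ 0 := by
        have := hmax A0 (Finset.mem_univ _)
        rwa [h, padicNorm.zero] at this
      have h2 : padicNorm p (g A0) = 0 := le_antisymm h1 (padicNorm.nonneg _)
      exact padicNorm.zero_of_padicNorm_eq_zero h2
    have hgApos : 0 < padicNorm p (g A) :=
      lt_of_le_of_ne (padicNorm.nonneg _) fun h => hgA (padicNorm.zero_of_padicNorm_eq_zero h.symm)
    have hev : ∑ B : {x // x ∈ F}, g B * f B.1 A.1 = 0 := by
      have := congrFun hg A.1
      simpa using this
    have hsplit : g A * f A.1 A.1 = - ∑ B ∈ Finset.univ.erase A, g B * f B.1 A.1 := by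
      have := Finset.add_sum_erase Finset.univ (fun B : {x // x ∈ F} => g B * f B.1 A.1)
        (Finset.mem_univ A)
      rw [hev] at this
      linarith
    have hlt : padicNorm p (g A * f A.1 A.1)
        < padicNorm p (g A) * padicNorm p (f A.1 A.1) := by
      rw [hsplit, padicNorm.neg]
      refine padicNorm.sum_lt' (fun B hBmem => ?_)
        (mul_pos hgApos (lt_of_le_of_lt (zpow_nonneg (by exact_mod_cast hp.pos.le) _) (hdiag A.1)))
      have hBA : B.1 ≠ A.1 := fun h =>
        (Finset.mem_erase.mp hBmem).1 (Subtype.ext h)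
      calc padicNorm p (g B * f B.1 A.1)
          = padicNorm p (g B) * padicNorm p (f B.1 A.1) := padicNorm.mul _ _
        _ ≤ padicNorm p (g A) * ((p:ℚ) ^ (-(k:ℤ))) := by
            exact mul_le_mul (hmax B (Finset.mem_univ _)) (hoff A.1 A.2 B.1 B.2 hBA)
              (padicNorm.nonneg _) (padicNorm.nonneg _)
        _ < padicNorm p (g A) * padicNorm p (f A.1 A.1) :=
            mul_lt_mul_of_pos_left (hdiag A.1) hgApos
    rw [padicNorm.mul] at hlt
    exact lt_irrefl _ hlt
  -- counting via span
  have hspan : ∀ A : Finset (Fin n), f A ∈ Wd n L.card := fun A => Stmt11Aux.mem_Wd A L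
  set G : Finset (Finset (Fin n) → ℚ) :=
    (Finset.univ.powerset.filter (fun T : Finset (Fin n) => T.card ≤ L.card)).image eT with hG
  have hWG : Wd n L.card = Submodule.span ℚ (G : Set (Finset (Fin n) → ℚ)) := by
    rw [Wd, hG]
    congr 1
    ext x
    simp only [Set.mem_image, Set.mem_setOf_eq, Finset.coe_image, Finset.coe_filter,
      Finset.mem_powerset, Finset.mem_univ]
    constructor
    · rintro ⟨T, hT, rfl⟩
      exact ⟨T, ⟨by simp, hT⟩, rfl⟩
    · rintro ⟨T, ⟨-, hT⟩, rfl⟩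
      exact ⟨T, hT, rfl⟩
  have h1 : F.card ≤ Module.finrank ℚ (Wd n L.card) := by
    rw [← Fintype.card_coe]
    set v : {x // x ∈ F} → Wd n L.card := fun A => ⟨f A.1, hspan A.1⟩ with hv
    have hLIv : LinearIndependent ℚ v := by
      apply LinearIndependent.of_comp (Wd n L.card).subtype
      exact hLI
    exact hLIv.fintype_card_le_finrank
  have h2 : Module.finrank ℚ (Wd n L.card) ≤ G.card := by
    rw [hWG]
    have := finrank_span_le_card (R := ℚ) (G : Set (Finset (Fin n) → ℚ))
    simpa using this
  have h3 : G.card ≤ ∑ i ∈ Finset.range (L.card + 1), n.choose i := by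
    refine le_trans (Finset.card_image_le) ?_
    have hunion : (Finset.univ.powerset.filter (fun T : Finset (Fin n) => T.card ≤ L.card))
        = (Finset.range (L.card + 1)).biUnion
          (fun i => Finset.powersetCard i (Finset.univ : Finset (Fin n))) := by
      ext T
      simp only [Finset.mem_filter, Finset.mem_powerset, Finset.mem_biUnion, Finset.mem_range,
        Finset.mem_powersetCard, Finset.subset_univ, true_and, Nat.lt_succ_iff]
      constructor
      · rintro hT; exact ⟨T.card, hT, rfl⟩
      · rintro ⟨i, hi, rfl⟩; exact hi
    rw [hunion, Finset.card_biUnion]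
    · apply le_of_eq
      refine Finset.sum_congr rfl fun i _ => ?_
      rw [Finset.card_powersetCard, Finset.card_univ, Fintype.card_fin]
    · intro i _ j _ hij
      refine Finset.disjoint_left.mpr fun T hTi hTj => hij ?_
      rw [Finset.mem_powersetCard] at hTi hTj
      omega
  omega
end

section
/- Let q be a power of a prime p, let L = {a, a+d, …, a+(s−1)d} ⊆ {1,…,q−1} be an arithmetic progression with a, d positive integers, and suppose Σ_{ℓ∈L} v_p(ℓ) < max{(s−1)v_p(d) + v_p(q), s·v_p(d) + v_p(s!) + 1}. If F ⊆ 2^[n] satisfies that |A \ B| is congruent modulo q to some element of L for all distinct A, B ∈ F, then |F| ≤ Σ_{i=0}^{s} C(n, i). -/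
/-!
For `A ∈ F` let `f_A(B) = ∏_{ℓ ∈ L} (|A \ B| - ℓ)`. As `|A \ B| = |A| - ∑_{x ∈ A} [x ∈ B]`, each
`f_A` is a polynomial of degree `≤ s` in the indicators `[S ⊆ B]`, `|S| ≤ s`, so the `f_A` lie in a
space of dimension `∑_{i ≤ s} C(n, i)`. With `V = ∑_{ℓ ∈ L} v_p(ℓ) = v_p(f_A(A))`, the valuation
hypothesis forces `p^(V+1) ∣ f_A(B)` for `A ≠ B`: writing
`|A \ B| - ℓ_i = (|A \ B| - ℓ_j) + (j - i) d`, either the factor `i = j` contributes `v_p(q)` and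
the others `v_p(d)` each, or, after removing `p^(v_p d)` from every factor, what is left are `s`
consecutive terms of a progression with difference prime to `p`, one of them divisible by
`p^k > s` (`k = v_p(q) - v_p(d)`), whose product carries `p^(v_p(s!)+1)`. So the matrix
`(f_A(B))` is `p`-adically diagonally dominant, and the `f_A` are linearly independent.
-/

open Finset Module
open scoped Nat

section ArithmeticProgression

variable {p : ℕ} [hp : Fact p.Prime]

lemma padicValNat_finset_prod {ι : Type*} {I : Finset ι} {f : ι → ℕ} (hf : ∀ i ∈ I, f i ≠ 0) :
    padicValNat p (∏ i ∈ I, f i) = ∑ i ∈ I, padicValNat p (f i) := by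
  rw [← Nat.factorization_def _ hp.out, Nat.factorization_prod hf, Finset.sum_apply']
  exact sum_congr rfl fun i _ => Nat.factorization_def _ hp.out

lemma padicValNat_add_mul_le {a d : ℕ} (i : ℕ) (ha : a ≠ 0)
    (h : padicValNat p a < padicValNat p d) : padicValNat p (a + i * d) ≤ padicValNat p a := by
  by_contra! hlt
  have hsum : p ^ (padicValNat p a + 1) ∣ a + i * d := (pow_dvd_pow p hlt).trans pow_padicValNat_dvd
  have hmul : p ^ (padicValNat p a + 1) ∣ i * d :=
    ((pow_dvd_pow p h).trans pow_padicValNat_dvd).mul_left i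
  exact pow_succ_padicValNat_not_dvd ha ((Nat.dvd_add_left hmul).1 hsum)

lemma padicValNat_lt_of_lt_pow {a m : ℕ} (ha : a ≠ 0) (h : a < p ^ m) : padicValNat p a < m :=
  (Nat.pow_lt_pow_iff_right hp.out.one_lt).1
    ((Nat.le_of_dvd (Nat.pos_of_ne_zero ha) pow_padicValNat_dvd).trans_lt h)

lemma exists_lt_dvd_add_mul {N : ℕ} (a : ℕ) {d : ℕ} (hN : 0 < N) (hd : d.Coprime N) :
    ∃ i < N, N ∣ a + i * d := by
  have : NeZero N := ⟨hN.ne'⟩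
  let u := ZMod.unitOfCoprime d hd
  refine ⟨(-(a : ZMod N) * ↑u⁻¹).val, ZMod.val_lt _, (ZMod.natCast_eq_zero_iff _ _).1 ?_⟩
  have hu : (d : ZMod N) = u := rfl
  push_cast
  rw [ZMod.natCast_val, ZMod.cast_id', id, hu, mul_assoc, Units.inv_mul, mul_one, add_neg_cancel]

lemma pow_card_filter_pow_dvd_dvd (y : ℤ) (k : ℕ) :
    (p : ℤ) ^ #{t ∈ Icc 1 k | (p : ℤ) ^ t ∣ y} ∣ y := by
  rcases eq_or_ne y 0 with rfl | hy
  · exact dvd_zero _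
  refine (pow_dvd_pow _ ?_).trans ((padicValInt_dvd_iff _ y).2 (Or.inr le_rfl))
  calc #{t ∈ Icc 1 k | (p : ℤ) ^ t ∣ y} ≤ #(Icc 1 (padicValInt p y)) :=
        card_le_card fun t ht => by
          simp only [mem_filter, mem_Icc] at ht ⊢
          exact ⟨ht.1.1, ((padicValInt_dvd_iff t y).1 ht.2).resolve_left hy⟩
    _ = padicValInt p y := by simp

lemma pow_sum_card_filter_pow_dvd_dvd_prod {ι : Type*} (I : Finset ι) (y : ι → ℤ) (k : ℕ) :
    (p : ℤ) ^ (∑ t ∈ Icc 1 k, #{i ∈ I | (p : ℤ) ^ t ∣ y i}) ∣ ∏ i ∈ I, y i := by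
  have hswap : ∑ t ∈ Icc 1 k, #{i ∈ I | (p : ℤ) ^ t ∣ y i} =
      ∑ i ∈ I, #{t ∈ Icc 1 k | (p : ℤ) ^ t ∣ y i} := by
    simp only [card_filter]
    exact sum_comm
  rw [hswap, ← prod_pow_eq_pow_sum]
  exact prod_dvd_prod_of_dvd _ _ fun i _ => pow_card_filter_pow_dvd_dvd (y i) k

/-- By Legendre's formula `v_p(s!) = ∑_{t ≤ k} ⌊s / p^t⌋`, and the `s` consecutive terms meet
every residue class modulo `p ^ t` at least `⌊s / p^t⌋` times; for `t = k` the term `i = j` is one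
more. -/
lemma pow_succ_padicValNat_factorial_dvd_prod {s j k : ℕ} (hj : j < s) (hs : s < p ^ k) (E d : ℤ) :
    (p : ℤ) ^ (padicValNat p s ! + 1) ∣ ∏ i ∈ range s, ((p : ℤ) ^ k * E + (j - i) * d) := by
  set y : ℕ → ℤ := fun i => (p : ℤ) ^ k * E + (j - i) * d
  have hcount : ∀ t ∈ Icc 1 k, s / p ^ t ≤ #{i ∈ range s | (p : ℤ) ^ t ∣ y i} := by
    intro t ht
    have hsub : {i ∈ range s | i ≡ j [MOD p ^ t]} ⊆ {i ∈ range s | (p : ℤ) ^ t ∣ y i} := by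
      intro i
      simp only [mem_filter]
      refine And.imp_right fun hi => dvd_add ?_ (dvd_mul_of_dvd_left ?_ d)
      · exact (pow_dvd_pow _ (mem_Icc.1 ht).2).mul_right E
      · exact_mod_cast hi.dvd
    calc s / p ^ t ≤ Nat.count (· ≡ j [MOD p ^ t]) s := by
          rw [Nat.count_modEq_card _ (pow_pos hp.out.pos t)]
          exact Nat.le_add_right _ _
      _ = #{i ∈ range s | i ≡ j [MOD p ^ t]} := Nat.count_eq_card_filter_range _ _
      _ ≤ _ := card_le_card hsub
  have hk : s / p ^ k < #{i ∈ range s | (p : ℤ) ^ k ∣ y i} := by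
    rw [Nat.div_eq_of_lt hs, Finset.card_pos]
    exact ⟨j, mem_filter.2 ⟨mem_range.2 hj, by simp [y]⟩⟩
  have hk1 : 1 ≤ k := by
    rcases k with _ | k
    · simp at hs; omega
    · omega
  have hlog : Nat.log p s < k + 1 := (Nat.log_lt_of_lt_pow (by omega) hs).trans (lt_add_one k)
  have hexp : padicValNat p s ! + 1 ≤ ∑ t ∈ Icc 1 k, #{i ∈ range s | (p : ℤ) ^ t ∣ y i} := by
    rw [padicValNat_factorial hlog, ← Finset.Ico_add_one_right_eq_Icc]
    exact sum_lt_sum hcount ⟨k, mem_Ico.2 ⟨hk1, lt_add_one k⟩, hk⟩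
  exact (pow_dvd_pow _ hexp).trans (pow_sum_card_filter_pow_dvd_dvd_prod _ y k)

lemma mul_pow_dvd_prod_sub {R : Type*} [CommRing R] {q g c a d : R} {s j : ℕ} (hj : j < s)
    (hc : q ∣ c - (a + j * d)) (hgq : g ∣ q) (hgd : g ∣ d) :
    q * g ^ (s - 1) ∣ ∏ i ∈ range s, (c - (a + i * d)) := by
  have hj' : j ∈ range s := mem_range.2 hj
  rw [← mul_prod_erase _ _ hj']
  refine mul_dvd_mul hc ?_
  have hpow : g ^ (s - 1) = ∏ _i ∈ (range s).erase j, g := by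
    rw [prod_const, card_erase_of_mem hj', card_range]
  rw [hpow]
  refine prod_dvd_prod_of_dvd _ _ fun i _ => ?_
  rw [show c - (a + i * d) = (c - (a + j * d)) + (j - i) * d by ring]
  exact dvd_add (hgq.trans hc) (dvd_mul_of_dvd_right hgd _)

lemma pow_dvd_prod_sub_of_lt_pow {c a d : ℤ} {s j e k : ℕ} (hj : j < s) (hs : s < p ^ k)
    (hd : (p : ℤ) ^ e ∣ d) (hc : (p : ℤ) ^ (e + k) ∣ c - (a + j * d)) :
    (p : ℤ) ^ (s * e + padicValNat p s ! + 1) ∣ ∏ i ∈ range s, (c - (a + i * d)) := by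
  obtain ⟨d', rfl⟩ := hd
  obtain ⟨E, hE⟩ := hc
  have hfactor : ∀ i : ℕ, c - (a + i * (p ^ e * d')) = p ^ e * (p ^ k * E + (j - i) * d') := by
    intro i
    linear_combination hE
  rw [prod_congr rfl fun i _ => hfactor i, prod_mul_distrib, prod_const, card_range, ← pow_mul,
    add_assoc, pow_add, mul_comm s e]
  exact mul_dvd_mul_left _ (pow_succ_padicValNat_factorial_dvd_prod hj hs E d')

lemma pow_dvd_prod_sub_of_padicValNat_le {m a d s j : ℕ} {c : ℤ} (ha : 0 < a) (hd : 0 < d)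
    (hL : ∀ i < s, a + i * d < p ^ m) (hdm : padicValNat p d < m)
    (hda : padicValNat p d ≤ padicValNat p a) (hj : j < s) (hc : (p : ℤ) ^ m ∣ c - (a + j * d)) :
    (p : ℤ) ^ (s * padicValNat p d + padicValNat p s ! + 1) ∣ ∏ i ∈ range s, (c - (a + i * d)) := by
  set e := padicValNat p d
  obtain ⟨d', hd'⟩ : p ^ e ∣ d := pow_padicValNat_dvd
  obtain ⟨a', ha'⟩ : p ^ e ∣ a := (pow_dvd_pow p hda).trans pow_padicValNat_dvd
  have hme : e + (m - e) = m := Nat.add_sub_cancel' hdm.le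
  have hcop : d'.Coprime (p ^ (m - e)) := by
    refine Nat.Coprime.pow_right _ (Nat.coprime_comm.1 ((hp.out.coprime_iff_not_dvd).2 ?_))
    rintro ⟨d'', rfl⟩
    have : p ^ (e + 1) ∣ d := ⟨d'', by rw [hd', pow_succ, mul_assoc]⟩
    exact pow_succ_padicValNat_not_dvd hd.ne' this
  -- `p ^ e * (a' + i * d') = a + i * d < p ^ m`, but `p ^ (m - e)` consecutive terms `a' + i * d'`
  -- meet every residue class modulo `p ^ (m - e)`
  have hs : s < p ^ (m - e) := by
    by_contra! hs
    obtain ⟨i, hi, hdvd⟩ := exists_lt_dvd_add_mul a' (pow_pos hp.out.pos _) hcop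
    have hdvd' : p ^ m ∣ a + i * d := by
      rw [ha', hd', show p ^ e * a' + i * (p ^ e * d') = p ^ e * (a' + i * d') by ring, ← hme,
        pow_add]
      exact mul_dvd_mul_left _ hdvd
    have := Nat.eq_zero_of_dvd_of_lt hdvd' (hL i (hi.trans_le hs))
    omega
  exact pow_dvd_prod_sub_of_lt_pow hj hs (by exact_mod_cast pow_padicValNat_dvd) (by rwa [hme])

theorem pow_succ_sum_padicValNat_dvd_prod_sub {m a d s j c : ℕ} (ha : 0 < a) (hd : 0 < d)
    (hL : ∀ i < s, a + i * d < p ^ m)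
    (hval : ∑ i ∈ range s, padicValNat p (a + i * d) <
      max ((s - 1) * padicValNat p d + m) (s * padicValNat p d + padicValNat p s ! + 1))
    (hj : j < s) (hc : c ≡ a + j * d [MOD p ^ m]) :
    (p : ℤ) ^ (∑ i ∈ range s, padicValNat p (a + i * d) + 1) ∣
      ∏ i ∈ range s, ((c : ℤ) - (a + i * d)) := by
  obtain ⟨s, rfl⟩ : ∃ s', s = s' + 1 := ⟨s - 1, by omega⟩
  simp only [add_tsub_cancel_right] at hval
  set e := padicValNat p d
  set V := ∑ i ∈ range (s + 1), padicValNat p (a + i * d)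
  have hc' : (p : ℤ) ^ m ∣ c - (a + j * d) := by exact_mod_cast hc.symm.dvd
  have hpd : ∀ {t}, t ≤ e → (p : ℤ) ^ t ∣ d := fun ht => by
    exact_mod_cast (pow_dvd_pow p ht).trans pow_padicValNat_dvd
  rcases le_or_gt m e with hme | hem
  · have hV : V < (s + 1) * m := by
      calc V < ∑ _i ∈ range (s + 1), m := sum_lt_sum_of_nonempty ⟨j, mem_range.2 hj⟩ fun i hi =>
              padicValNat_lt_of_lt_pow (by positivity) (hL i (mem_range.1 hi))
        _ = (s + 1) * m := by simp
    have := mul_pow_dvd_prod_sub hj hc' dvd_rfl (hpd hme)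
    rw [← pow_mul, ← pow_add, add_tsub_cancel_right] at this
    exact (pow_dvd_pow _ (by nlinarith)).trans this
  by_cases hVe : V < s * e + m
  · have := mul_pow_dvd_prod_sub hj hc' (pow_dvd_pow _ hem.le) (hpd le_rfl)
    rw [← pow_mul, ← pow_add, add_tsub_cancel_right] at this
    exact (pow_dvd_pow _ (by nlinarith)).trans this
  have hV : V < (s + 1) * e + padicValNat p (s + 1)! + 1 := by
    rw [lt_max_iff] at hval
    omega
  have hea : e ≤ padicValNat p a := by
    by_contra! hae
    have hVa : V ≤ (s + 1) * padicValNat p a := (sum_le_sum fun i _ =>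
      padicValNat_add_mul_le i ha.ne' hae).trans_eq (by simp)
    nlinarith
  exact (pow_dvd_pow _ hV).trans (pow_dvd_prod_sub_of_padicValNat_le ha hd hL hem hea hj hc')

lemma not_pow_succ_sum_padicValNat_dvd_prod {ι : Type*} {I : Finset ι} {f : ι → ℕ}
    (hf : ∀ i ∈ I, f i ≠ 0) : ¬ p ^ (∑ i ∈ I, padicValNat p (f i) + 1) ∣ ∏ i ∈ I, f i := by
  rw [← padicValNat_finset_prod hf]
  exact pow_succ_padicValNat_not_dvd (prod_ne_zero_iff.2 hf)

lemma not_pow_succ_sum_padicValNat_dvd_prod_neg {a : ℕ} (d s : ℕ) (ha : 0 < a) :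
    ¬ (p : ℤ) ^ (∑ i ∈ range s, padicValNat p (a + i * d) + 1) ∣
      ∏ i ∈ range s, -((a : ℤ) + i * d) := by
  rw [prod_neg, card_range, (isUnit_neg_one.pow s).dvd_mul_left]
  exact_mod_cast not_pow_succ_sum_padicValNat_dvd_prod fun i _ => by positivity

end ArithmeticProgression

lemma linearIndependent_of_padicNorm_offDiag_le_lt_diag {ι κ : Type*} [Fintype ι] {p : ℕ}
    [Fact p.Prime] (v : ι → κ → ℚ) (x : ι → κ) {r : ℚ} (hr : 0 ≤ r)
    (hdiag : ∀ i, r < padicNorm p (v i (x i)))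
    (hoff : ∀ i j, i ≠ j → padicNorm p (v i (x j)) ≤ r) : LinearIndependent ℚ v := by
  classical
  rw [Fintype.linearIndependent_iff]
  intro g hg
  by_contra! hne
  obtain ⟨i₀, hi₀⟩ := hne
  obtain ⟨j, -, hmax⟩ := exists_max_image univ (fun i => padicNorm p (g i)) ⟨i₀, mem_univ _⟩
  have hgj : 0 < padicNorm p (g j) :=
    ((padicNorm.nonneg _).lt_of_ne' (padicNorm.nonzero hi₀)).trans_le (hmax i₀ (mem_univ _))
  have hsum : g j * v j (x j) = -∑ i ∈ univ.erase j, g i * v i (x j) := by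
    have := congrFun hg (x j)
    simp only [Finset.sum_apply, Pi.smul_apply, smul_eq_mul, Pi.zero_apply] at this
    rw [← add_sum_erase _ _ (mem_univ j)] at this
    linear_combination this
  have hlt : padicNorm p (g j) * r < padicNorm p (g j * v j (x j)) := by
    rw [padicNorm.mul]
    exact mul_lt_mul_of_pos_left (hdiag j) hgj
  have hle : padicNorm p (-∑ i ∈ univ.erase j, g i * v i (x j)) ≤ padicNorm p (g j) * r := by
    rw [padicNorm.neg]
    refine padicNorm.sum_le' (fun i hi => ?_) (mul_nonneg hgj.le hr)
    rw [padicNorm.mul]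
    exact mul_le_mul (hmax i (mem_univ _)) (hoff i j (ne_of_mem_erase hi))
      (padicNorm.nonneg _) hgj.le
  rw [hsum] at hlt
  exact hlt.not_ge hle

section SetFunctions

variable {α : Type*} [DecidableEq α] (K : Type*) [Field K]

def subsetIndicator (S : Finset α) : Finset α → K := fun B => if S ⊆ B then 1 else 0

def indicatorSpan (t : ℕ) : Submodule K (Finset α → K) :=
  Submodule.span K (subsetIndicator K '' {S | #S ≤ t})

variable {K}

lemma subsetIndicator_mul (S T : Finset α) :
    subsetIndicator K S * subsetIndicator K T = subsetIndicator K (S ∪ T) := by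
  funext B
  by_cases hS : S ⊆ B <;> by_cases hT : T ⊆ B <;> simp [subsetIndicator, union_subset_iff, hS, hT]

lemma indicatorSpan_mul_le (t u : ℕ) :
    indicatorSpan (α := α) K t * indicatorSpan K u ≤ indicatorSpan K (t + u) := by
  rw [indicatorSpan, indicatorSpan, Submodule.span_mul_span]
  refine Submodule.span_mono ?_
  rintro _ ⟨_, ⟨S, hS, rfl⟩, _, ⟨T, hT, rfl⟩, rfl⟩
  exact ⟨S ∪ T, (card_union_le S T).trans (add_le_add hS hT), (subsetIndicator_mul S T).symm⟩

lemma one_mem_indicatorSpan (t : ℕ) : (1 : Finset α → K) ∈ indicatorSpan K t :=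
  Submodule.subset_span ⟨∅, by simp, by funext B; simp [subsetIndicator]⟩

lemma card_sdiff_sub_mem_indicatorSpan_one (A : Finset α) (c : K) :
    (fun B => (#(A \ B) : K) - c) ∈ indicatorSpan K 1 := by
  have hcard : (fun B => (#(A \ B) : K) - c) = (#A - c) • 1 - ∑ x ∈ A, subsetIndicator K {x} := by
    funext B
    simp only [Pi.sub_apply, Pi.smul_apply, Pi.one_apply, smul_eq_mul, mul_one, Finset.sum_apply,
      subsetIndicator, singleton_subset_iff, sum_boole, filter_mem_eq_inter]
    rw [← card_sdiff_add_card_inter A B, Nat.cast_add]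
    ring
  rw [hcard]
  refine sub_mem (Submodule.smul_mem _ _ (one_mem_indicatorSpan 1)) (sum_mem fun x _ => ?_)
  exact Submodule.subset_span ⟨{x}, by simp, rfl⟩

lemma prod_mem_indicatorSpan {ι : Type*} (I : Finset ι) {f : ι → Finset α → K}
    (hf : ∀ i ∈ I, f i ∈ indicatorSpan K 1) : ∏ i ∈ I, f i ∈ indicatorSpan K #I := by
  induction I using Finset.cons_induction with
  | empty => simpa using one_mem_indicatorSpan 0
  | cons i I hi ih =>
    rw [prod_cons, card_cons, add_comm]
    refine indicatorSpan_mul_le 1 #I (Submodule.mul_mem_mul (hf i (mem_cons_self i I)) ?_)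
    exact ih fun j hj => hf j (mem_cons_of_mem hj)

lemma prod_card_sdiff_sub_mem_indicatorSpan (A : Finset α) (c : ℕ → K) (s : ℕ) :
    (fun B => ∏ i ∈ range s, ((#(A \ B) : K) - c i)) ∈ indicatorSpan K s := by
  have := prod_mem_indicatorSpan (range s) fun i _ => card_sdiff_sub_mem_indicatorSpan_one A (c i)
  rwa [card_range, Finset.prod_fn] at this

lemma finrank_indicatorSpan_le [Fintype α] (t : ℕ) :
    finrank K (indicatorSpan (α := α) K t) ≤ ∑ i ∈ range (t + 1), (Fintype.card α).choose i := by
  classical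
  have hspan : indicatorSpan (α := α) K t =
      Submodule.span K (({S | #S ≤ t} : Finset (Finset α)).image (subsetIndicator K) :
        Set (Finset α → K)) := by
    simp [indicatorSpan]
  rw [hspan]
  refine (finrank_span_finset_le_card _).trans (card_image_le.trans ?_)
  simp_rw [← card_univ, ← card_powersetCard]
  refine (card_le_card fun S hS => mem_biUnion.2 ⟨#S, ?_, mem_powersetCard_univ.2 rfl⟩).trans
    card_biUnion_le
  simp only [mem_filter, mem_univ, true_and] at hS
  exact mem_range.2 (Nat.lt_succ_of_le hS)

lemma card_le_sum_choose_of_linearIndependent [Fintype α] {F : Finset (Finset α)} {t : ℕ}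
    {v : Finset α → Finset α → K} (hv : LinearIndependent K fun A : F => v A)
    (hspan : ∀ A ∈ F, v A ∈ indicatorSpan K t) :
    #F ≤ ∑ i ∈ range (t + 1), (Fintype.card α).choose i :=
  calc #F = finrank K (Submodule.span K (Set.range fun A : F => v A)) := by
        rw [finrank_span_eq_card hv, Fintype.card_coe]
    _ ≤ finrank K (indicatorSpan (α := α) K t) :=
        Submodule.finrank_mono (Submodule.span_le.2 (Set.range_subset_iff.2 fun A => hspan A A.2))
    _ ≤ _ := finrank_indicatorSpan_le t

end SetFunctions

theorem stmt_12 (n p m q a d s : ℕ) (hp : p.Prime) (hq : q = p ^ m)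
    (ha : 0 < a) (hd : 0 < d)
    (hL : ∀ i < s, a + i * d ≤ q - 1)
    (hval : ∑ i ∈ Finset.range s, padicValNat p (a + i * d) <
      max ((s - 1) * padicValNat p d + padicValNat p q)
        (s * padicValNat p d + padicValNat p (Nat.factorial s) + 1))
    (F : Finset (Finset (Fin n)))
    (hF : ∀ A ∈ F, ∀ B ∈ F, A ≠ B → ∃ i < s, (A \ B).card ≡ a + i * d [MOD q]) :
    F.card ≤ ∑ i ∈ Finset.range (s + 1), n.choose i := by
  classical
  have : Fact p.Prime := ⟨hp⟩
  subst hq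
  rw [padicValNat.prime_pow] at hval
  have hL' : ∀ i < s, a + i * d < p ^ m := fun i hi => by
    have := hL i hi
    have := pow_pos hp.pos m
    omega
  set V := ∑ i ∈ range s, padicValNat p (a + i * d)
  set M : Finset (Fin n) → Finset (Fin n) → ℤ :=
    fun A B => ∏ i ∈ range s, ((#(A \ B) : ℤ) - (a + i * d))
  have hind : LinearIndependent ℚ fun (A : F) B => (M A B : ℚ) := by
    refine linearIndependent_of_padicNorm_offDiag_le_lt_diag (p := p) _ Subtype.val
      (r := (p : ℚ) ^ (-(V + 1 : ℕ) : ℤ)) (by positivity)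
      (fun A => ?_) (fun A B hAB => ?_)
    · rw [← not_le, ← padicNorm.dvd_iff_norm_le]
      simpa [M] using not_pow_succ_sum_padicValNat_dvd_prod_neg (p := p) d s ha
    · rw [← padicNorm.dvd_iff_norm_le]
      obtain ⟨j, hj, hc⟩ := hF A A.2 B B.2 (Subtype.coe_ne_coe.2 hAB)
      push_cast
      exact pow_succ_sum_padicValNat_dvd_prod_sub ha hd hL' hval hj hc
  have hspan : ∀ A ∈ F, (fun B => (M A B : ℚ)) ∈ indicatorSpan ℚ s := fun A _ => by
    simpa [M] using prod_card_sdiff_sub_mem_indicatorSpan A (fun i => (a + i * d : ℚ)) s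
  simpa using card_le_sum_choose_of_linearIndependent (v := fun A B => (M A B : ℚ)) hind hspan
end

section
/- Let q be a prime power and L ⊆ {1,…,q−1} with |L| = s. If F ⊆ 2^[n] is a family such that for all distinct A, B ∈ F, |A \ B| is congruent modulo q to some element of L, then |F| ≤ Σ_{i=0}^{2^{s−1}} C(n, i). -/
/-!
Write `q = p ^ k`; every `ℓ ∈ L` has `p`-adic valuation `e ℓ < k`. With suitable weights
`μ ℓ ≥ 1` of total at most `2 ^ (s - 1)`, the polynomial `P = ∏ (X - ℓ) ^ μ ℓ` has valuation
exactly `a = ∑ μ ℓ * e ℓ` at `0`, but valuation `> a` at every `x ≡ ℓ₀ (mod q)` with `ℓ₀ ∈ L`: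
the factor `x - ℓ₀` contributes `k` instead of `e ℓ₀`, which outweighs what the other factors
lose. So the matrix `(P |A \ B|)_{A, B ∈ F}` is, after division by `p ^ a`, diagonal modulo `p`
with unit diagonal, hence nonsingular, and the functions `B ↦ P |A \ B|`, `A ∈ F`, are linearly
independent. Since `|A \ B| = ∑_{a ∈ A} [a ∉ B]` and these indicators are idempotent, each of
them lies in the span of the functions `B ↦ [S ∩ B = ∅]` with `|S| ≤ deg P`, and there are at
most `∑_{i ≤ deg P} C(n, i)` of those.
-/

open Finset Polynomial

namespace ModularSperner

section Weights

theorem one_add_le_max_one_mul {S T m : ℕ} (h : T ≤ S * m) : 1 + T ≤ max 1 S * (m + 1) := by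
  rcases Nat.eq_zero_or_pos S with rfl | hS
  · simp_all
  · rw [max_eq_right hS]
    nlinarith

variable {ι : Type*} [DecidableEq ι]

theorem exists_weights (k : ℕ) (e : ι → ℕ) (L : Finset ι) (he : ∀ ℓ ∈ L, e ℓ < k) :
    ∃ μ : ι → ℕ, (∀ ℓ₀ ∈ L, 1 + ∑ ℓ ∈ L, μ ℓ * (e ℓ - e ℓ₀) ≤ μ ℓ₀ * (k - e ℓ₀)) ∧
      ∑ ℓ ∈ L, μ ℓ ≤ 2 ^ (#L - 1) := by
  induction L using Finset.induction_on_min_value e with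
  | empty => exact ⟨0, by simp⟩
  | insert a s has hmin ih =>
    obtain ⟨μ, hμ, hsum⟩ := ih fun ℓ hℓ => he ℓ (mem_insert_of_mem hℓ)
    set S := ∑ ℓ ∈ s, μ ℓ
    have hupd (f : ι → ℕ) :
        ∑ ℓ ∈ s, Function.update μ a (max 1 S) ℓ * f ℓ = ∑ ℓ ∈ s, μ ℓ * f ℓ :=
      sum_congr rfl fun ℓ hℓ => by rw [Function.update_of_ne (ne_of_mem_of_not_mem hℓ has)]
    -- `a` has least valuation, so its weight does not enter the conditions of the others.
    refine ⟨Function.update μ a (max 1 S), fun ℓ₀ hℓ₀ => ?_, ?_⟩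
    · rw [sum_insert has, hupd]
      rcases mem_insert.1 hℓ₀ with rfl | hℓ₀
      · have hk : e ℓ₀ < k := he ℓ₀ (mem_insert_self ℓ₀ s)
        rw [Function.update_self, Nat.sub_self, mul_zero, zero_add,
          show k - e ℓ₀ = k - e ℓ₀ - 1 + 1 by omega]
        refine one_add_le_max_one_mul ((sum_le_sum fun ℓ hℓ => ?_).trans_eq (sum_mul s μ _).symm)
        have := he ℓ (mem_insert_of_mem hℓ)
        exact Nat.mul_le_mul_left _ (by omega)
      · rw [Function.update_of_ne (ne_of_mem_of_not_mem hℓ₀ has),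
          Nat.sub_eq_zero_of_le (hmin ℓ₀ hℓ₀), mul_zero, zero_add]
        exact hμ ℓ₀ hℓ₀
    · have hs := hupd fun _ => 1
      simp only [mul_one] at hs
      rw [sum_insert has, hs, Function.update_self, card_insert_of_notMem has, Nat.add_sub_cancel]
      rcases s.eq_empty_or_nonempty with rfl | hne
      · simp [S]
      · have h1 : 1 ≤ 2 ^ (#s - 1) := Nat.one_le_two_pow
        have h2 : 2 ^ #s = 2 * 2 ^ (#s - 1) := by
          rw [← pow_succ', Nat.sub_add_cancel hne.card_pos]
        omega

end Weights

section Divisibility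

variable {R : Type*} [CommRing R]

theorem pow_min_dvd_sub {π x y z : R} {i j k : ℕ} (hy : π ^ i ∣ y) (hz : π ^ j ∣ z)
    (hxz : π ^ k ∣ x - z) (hjk : j ≤ k) : π ^ min i j ∣ x - y := by
  rw [show x - y = (x - z) + z - y by ring]
  exact dvd_sub (dvd_add ((pow_dvd_pow π ((min_le_right i j).trans hjk)).trans hxz)
    ((pow_dvd_pow π (min_le_right i j)).trans hz)) ((pow_dvd_pow π (min_le_left i j)).trans hy)

theorem pow_dvd_prod_sub_pow {ι : Type*} [DecidableEq ι] {π x : R} {k : ℕ} {L : Finset ι}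
    {c : ι → R} {e μ : ι → ℕ} (hc : ∀ ℓ ∈ L, π ^ e ℓ ∣ c ℓ) {ℓ₀ : ι} (hℓ₀ : ℓ₀ ∈ L)
    (he₀ : e ℓ₀ ≤ k) (hx : π ^ k ∣ x - c ℓ₀)
    (hμ : 1 + ∑ ℓ ∈ L, μ ℓ * (e ℓ - e ℓ₀) ≤ μ ℓ₀ * (k - e ℓ₀)) :
    π ^ (∑ ℓ ∈ L, μ ℓ * e ℓ + 1) ∣ ∏ ℓ ∈ L, (x - c ℓ) ^ μ ℓ := by
  -- `d ℓ` is a lower bound for the valuation of `x - c ℓ`.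
  set d : ι → ℕ := fun ℓ => min (e ℓ) (e ℓ₀) + if ℓ = ℓ₀ then k - e ℓ₀ else 0
  have hfactor : ∀ ℓ ∈ L, π ^ (d ℓ * μ ℓ) ∣ (x - c ℓ) ^ μ ℓ := by
    intro ℓ hℓ
    rw [pow_mul]
    refine pow_dvd_pow_of_dvd ?_ _
    by_cases h : ℓ = ℓ₀
    · subst h
      simpa [d, Nat.add_sub_cancel' he₀] using hx
    · simpa [d, h] using pow_min_dvd_sub (hc ℓ hℓ) (hc ℓ₀ hℓ₀) hx he₀
  have hprod := prod_dvd_prod_of_dvd _ _ hfactor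
  rw [prod_pow_eq_pow_sum] at hprod
  refine (pow_dvd_pow π ?_).trans hprod
  have hd : ∑ ℓ ∈ L, d ℓ * μ ℓ = ∑ ℓ ∈ L, min (e ℓ) (e ℓ₀) * μ ℓ + (k - e ℓ₀) * μ ℓ₀ := by
    simp only [d, add_mul, sum_add_distrib, ite_mul, zero_mul, sum_ite_eq', if_pos hℓ₀]
  have he : ∑ ℓ ∈ L, μ ℓ * e ℓ =
      ∑ ℓ ∈ L, min (e ℓ) (e ℓ₀) * μ ℓ + ∑ ℓ ∈ L, μ ℓ * (e ℓ - e ℓ₀) := by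
    rw [← sum_add_distrib]
    refine sum_congr rfl fun ℓ _ => ?_
    rw [mul_comm _ (μ ℓ), ← mul_add]
    congr 1
    omega
  linarith

end Divisibility

/-- The paper's "`P` separates `0` from `S` `π`-adically", `a` being the valuation of `P 0`. -/
def SeparatesPAdically (π : ℤ) (P : ℤ[X]) (S : Set ℤ) : Prop :=
  ∃ a : ℕ, π ^ a ∣ P.eval 0 ∧ ¬π ^ (a + 1) ∣ P.eval 0 ∧ ∀ x ∈ S, π ^ (a + 1) ∣ P.eval x

theorem exists_separatesPAdically {p : ℕ} (hp : p.Prime) (k : ℕ) (L : Finset ℕ)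
    (hL : ∀ ℓ ∈ L, 0 < ℓ ∧ ℓ < p ^ k) :
    ∃ P : ℤ[X], P.natDegree ≤ 2 ^ (#L - 1) ∧
      SeparatesPAdically p P {x | ∃ ℓ ∈ L, x ≡ ℓ [ZMOD p ^ k]} := by
  set e : ℕ → ℕ := fun ℓ => ℓ.factorization p
  have he : ∀ ℓ ∈ L, e ℓ < k := fun ℓ hℓ => (Nat.pow_lt_pow_iff_right hp.one_lt).1
    ((Nat.ordProj_le p (hL ℓ hℓ).1.ne').trans_lt (hL ℓ hℓ).2)
  obtain ⟨μ, hμ, hμL⟩ := exists_weights k e L he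
  have hne : ∀ ℓ ∈ L, ℓ ^ μ ℓ ≠ 0 := fun ℓ hℓ => pow_ne_zero _ (hL ℓ hℓ).1.ne'
  have hval : (∏ ℓ ∈ L, ℓ ^ μ ℓ).factorization p = ∑ ℓ ∈ L, μ ℓ * e ℓ := by
    simp [Nat.factorization_prod hne, Nat.factorization_pow, e]
  have h0 : ((∏ ℓ ∈ L, (X - C (ℓ : ℤ)) ^ μ ℓ).eval 0).natAbs = ∏ ℓ ∈ L, ℓ ^ μ ℓ := by
    simp only [eval_prod, eval_pow, eval_sub, eval_X, eval_C, zero_sub]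
    exact (map_prod Int.natAbsHom _ L).trans (by simp)
  refine ⟨∏ ℓ ∈ L, (X - C (ℓ : ℤ)) ^ μ ℓ, ?_, ∑ ℓ ∈ L, μ ℓ * e ℓ, ?_, ?_, ?_⟩
  · rw [natDegree_prod_of_monic _ _ fun ℓ _ => (monic_X_sub_C _).pow _]
    simpa only [natDegree_pow, natDegree_X_sub_C, mul_one] using hμL
  · rw [← Nat.cast_pow, Int.natCast_dvd, h0, ← hval]
    exact Nat.ordProj_dvd _ _
  · rw [← Nat.cast_pow, Int.natCast_dvd, h0, ← hval]
    exact Nat.pow_succ_factorization_not_dvd (prod_ne_zero_iff.2 hne) hp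
  · rintro x ⟨ℓ₀, hℓ₀, hx⟩
    simp only [eval_prod, eval_pow, eval_sub, eval_X, eval_C]
    exact pow_dvd_prod_sub_pow (fun ℓ _ => by exact_mod_cast Nat.ordProj_dvd ℓ p) hℓ₀
      (he ℓ₀ hℓ₀).le hx.symm.dvd (hμ ℓ₀ hℓ₀)

section Matrix

variable {R ι : Type*} [CommRing R] [Fintype ι] [DecidableEq ι]

theorem det_notMem_of_offDiag_mem {I : Ideal R} [I.IsPrime] (M : Matrix ι ι R)
    (hoff : ∀ i j, i ≠ j → M i j ∈ I) (hdiag : ∀ i, M i i ∉ I) : M.det ∉ I := by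
  have hdiagonal :
      M.map (Ideal.Quotient.mk I) = Matrix.diagonal fun i => Ideal.Quotient.mk I (M i i) := by
    ext i j
    by_cases h : i = j
    · subst h; simp
    · simpa [h] using Ideal.Quotient.eq_zero_iff_mem.2 (hoff i j h)
  rw [← Ideal.Quotient.eq_zero_iff_mem, RingHom.map_det, RingHom.mapMatrix_apply, hdiagonal,
    Matrix.det_diagonal]
  exact prod_ne_zero_iff.2 fun i _ => by rw [Ne, Ideal.Quotient.eq_zero_iff_mem]; exact hdiag i

theorem det_ne_zero_of_pow_dvd [IsDomain R] (M : Matrix ι ι R) {π : R} (hπ : Prime π) (a : ℕ)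
    (hdvd : ∀ i j, π ^ a ∣ M i j) (hoff : ∀ i j, i ≠ j → π ^ (a + 1) ∣ M i j)
    (hdiag : ∀ i, ¬π ^ (a + 1) ∣ M i i) : M.det ≠ 0 := by
  choose N hN using hdvd
  have hM : M = π ^ a • Matrix.of N := by ext i j; simp [hN]
  have hπa : π ^ a ≠ 0 := pow_ne_zero a hπ.ne_zero
  have : (Ideal.span {π}).IsPrime := (Ideal.span_singleton_prime hπ.ne_zero).2 hπ
  have hN : (Matrix.of N).det ∉ Ideal.span {π} := by
    refine det_notMem_of_offDiag_mem _ (fun i j hij => ?_) fun i => ?_ <;>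
      rw [Matrix.of_apply, Ideal.mem_span_singleton]
    · simpa [hN, pow_succ, mul_dvd_mul_iff_left hπa] using hoff i j hij
    · simpa [hN, pow_succ, mul_dvd_mul_iff_left hπa] using hdiag i
  rw [hM, Matrix.det_smul]
  exact mul_ne_zero (pow_ne_zero _ hπa) fun h => hN (h ▸ Submodule.zero_mem _)

end Matrix

section Sperner

variable {α : Type*} [DecidableEq α]

def avoidIndicator (S B : Finset α) : ℚ := if Disjoint S B then 1 else 0

theorem pow_card_sdiff_mem_span (A : Finset α) (i : ℕ) :
    (fun B => (#(A \ B) : ℚ) ^ i) ∈ Submodule.span ℚ (avoidIndicator '' {S | #S ≤ i}) := by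
  have hcard : ∀ B, (#(A \ B) : ℚ) = ∑ a ∈ A, avoidIndicator {a} B := by
    intro B
    simp [avoidIndicator, sdiff_eq_filter, card_filter]
  have hexp : (fun B => (#(A \ B) : ℚ) ^ i) =
      ∑ f ∈ Fintype.piFinset fun _ : Fin i => A, avoidIndicator (univ.image f) := by
    funext B
    rw [hcard, sum_pow', Finset.sum_apply]
    refine sum_congr rfl fun f _ => ?_
    simp only [avoidIndicator, disjoint_singleton_left, Fintype.prod_boole]
    simp [Finset.disjoint_left]
  rw [hexp]
  exact Submodule.sum_mem _ fun f _ =>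
    Submodule.subset_span ⟨_, card_image_le.trans (by simp), rfl⟩

theorem eval_card_sdiff_mem_span (P : ℤ[X]) (A : Finset α) :
    (fun B => ((P.eval #(A \ B) : ℤ) : ℚ)) ∈
      Submodule.span ℚ (avoidIndicator '' {S | #S ≤ P.natDegree}) := by
  have hexp : (fun B => ((P.eval #(A \ B) : ℤ) : ℚ)) =
      ∑ i ∈ range (P.natDegree + 1), (P.coeff i : ℚ) • fun B => (#(A \ B) : ℚ) ^ i := by
    funext B
    simp [eval_eq_sum_range]
  rw [hexp]
  refine Submodule.sum_mem _ fun i hi => Submodule.smul_mem _ _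
    (Submodule.span_mono ?_ (pow_card_sdiff_mem_span A i))
  exact Set.image_mono fun S hS => le_trans hS (Nat.lt_succ_iff.1 (mem_range.1 hi))

theorem linearIndependent_eval_card_sdiff {π : ℤ} (hπ : Prime π) {P : ℤ[X]} {S : Set ℤ}
    (hP : SeparatesPAdically π P S) (F : Finset (Finset α))
    (hF : ∀ A ∈ F, ∀ B ∈ F, A ≠ B → (#(A \ B) : ℤ) ∈ S) :
    LinearIndependent ℚ fun A : F => fun B => ((P.eval #(A.1 \ B) : ℤ) : ℚ) := by
  obtain ⟨a, h0, h0', hS⟩ := hP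
  let M : Matrix F F ℤ := Matrix.of fun A B => P.eval (#(A.1 \ B.1) : ℤ)
  have hoff : ∀ A B, A ≠ B → π ^ (a + 1) ∣ M A B := fun A B h =>
    hS _ (hF A A.2 B B.2 (Subtype.coe_injective.ne h))
  have hdvd : ∀ A B, π ^ a ∣ M A B := by
    intro A B
    by_cases h : A = B
    · subst h; simpa [M] using h0
    · exact (pow_dvd_pow π a.le_succ).trans (hoff A B h)
  have hdet : M.det ≠ 0 := det_ne_zero_of_pow_dvd M hπ a hdvd hoff fun A => by simpa [M] using h0'
  have hrows := Matrix.linearIndependent_rows_of_det_ne_zero (A := M.map (Int.castRingHom ℚ))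
    (by rw [← RingHom.mapMatrix_apply, ← RingHom.map_det]; exact Int.cast_ne_zero.2 hdet)
  exact LinearIndependent.of_comp (LinearMap.funLeft ℚ ℚ Subtype.val) hrows

theorem card_le_sum_choose_of_separatesPAdically [Fintype α] {π : ℤ} (hπ : Prime π) {P : ℤ[X]}
    {S : Set ℤ} (hP : SeparatesPAdically π P S) (F : Finset (Finset α))
    (hF : ∀ A ∈ F, ∀ B ∈ F, A ≠ B → (#(A \ B) : ℤ) ∈ S) :
    #F ≤ ∑ i ∈ range (P.natDegree + 1), (Fintype.card α).choose i := by
  set T := (range (P.natDegree + 1)).biUnion fun i => powersetCard i (univ : Finset α)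
  have hspan : Set.range (fun A : F => fun B => ((P.eval #(A.1 \ B) : ℤ) : ℚ)) ≤
      Submodule.span ℚ (T.image avoidIndicator : Set (Finset α → ℚ)) := by
    rintro _ ⟨A, rfl⟩
    refine Submodule.span_mono ?_ (eval_card_sdiff_mem_span P A.1)
    rintro _ ⟨S, hS, rfl⟩
    exact mem_image_of_mem _ (mem_biUnion.2 ⟨#S, mem_range.2 (Nat.lt_succ_of_le hS),
      mem_powersetCard.2 ⟨subset_univ S, rfl⟩⟩)
  calc #F = Fintype.card F := (Fintype.card_coe F).symm
    _ ≤ Fintype.card (T.image avoidIndicator : Set (Finset α → ℚ)) :=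
      linearIndependent_le_span_aux' _ (linearIndependent_eval_card_sdiff hπ hP F hF) _ hspan
    _ ≤ #T := by simpa using card_image_le
    _ ≤ ∑ i ∈ range (P.natDegree + 1), #(powersetCard i (univ : Finset α)) := card_biUnion_le
    _ = _ := by simp [card_powersetCard]

end Sperner

end ModularSperner

theorem stmt_14 (n q s : ℕ) (hq : IsPrimePow q)
    (L : Finset ℕ) (hL : L ⊆ Finset.Icc 1 (q - 1)) (hLs : L.card = s)
    (F : Finset (Finset (Fin n)))
    (hF : ∀ A ∈ F, ∀ B ∈ F, A ≠ B → ∃ ℓ ∈ L, (A \ B).card ≡ ℓ [MOD q]) :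
    F.card ≤ ∑ i ∈ Finset.range (2 ^ (s - 1) + 1), n.choose i := by
  obtain ⟨p, k, hp, -, rfl⟩ := hq
  rw [← Nat.prime_iff] at hp
  obtain ⟨P, hdeg, hsep⟩ := ModularSperner.exists_separatesPAdically hp k L fun ℓ hℓ => by
    have := mem_Icc.1 (hL hℓ)
    omega
  have hcard := ModularSperner.card_le_sum_choose_of_separatesPAdically
    (Nat.prime_iff_prime_int.1 hp) hsep F fun A hA B hB hAB => by
      obtain ⟨ℓ, hℓ, hmod⟩ := hF A hA B hB hAB
      exact ⟨ℓ, hℓ, by exact_mod_cast Int.natCast_modEq_iff.2 hmod⟩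
  rw [Fintype.card_fin] at hcard
  subst hLs
  exact hcard.trans (sum_le_sum_of_subset (range_subset_range.2 (by omega)))
end

section
/- Let q be a prime power and L ⊆ {0,1,…,q−1} with |L| = s. Let F ⊆ 2^[n] be a family such that no |A| for A ∈ F is congruent modulo q to an element of L, while |A ∩ B| is congruent modulo q to some element of L for every pair of distinct A, B ∈ F. Then |F| ≤ Σ_{i=0}^{q−1} C(n, i). -/
/-!
Write `q = p ^ k`. By Lucas' theorem, `C(m, q - 1)` is nonzero modulo `p` exactly when
`m ≡ -1 [MOD q]`. Hence for `A ∈ F` the function `B ↦ C(|A ∩ B| + q - 1 - (|A| mod q), q - 1)`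
in `ZMod p` is nonzero at `B = A` and vanishes at every other `B ∈ F`, where `|A ∩ B|` is
congruent to an element of `L` and `|A|` is not. So these `|F|` functions are linearly
independent. By Vandermonde's identity each of them is a combination of the indicators
`B ↦ [T ⊆ B]` with `|T| < q`, and there are `∑ i < q, C(n, i)` of those.
-/

open Finset

namespace Nat

theorem pow_succ_dvd_add_one_iff {p : ℕ} (hp : 0 < p) (k m : ℕ) :
    p ^ (k + 1) ∣ m + 1 ↔ m % p = p - 1 ∧ p ^ k ∣ m / p + 1 := by
  have hm : m + 1 = p * (m / p) + (m % p + 1) := by rw [← add_assoc, Nat.div_add_mod]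
  have hlt : m % p < p := Nat.mod_lt m hp
  have hcarry (h : m % p = p - 1) : m + 1 = p * (m / p + 1) := by rw [mul_add_one]; omega
  constructor
  · intro h
    have hdigit : m % p = p - 1 := by
      have hdvd : p ∣ m % p + 1 := (Nat.dvd_add_right (dvd_mul_right _ _)).mp
        (hm ▸ dvd_trans (dvd_pow_self p k.succ_ne_zero) h)
      have := Nat.le_of_dvd (Nat.succ_pos _) hdvd
      omega
    rw [hcarry hdigit, pow_succ'] at h
    exact ⟨hdigit, Nat.dvd_of_mul_dvd_mul_left hp h⟩
  · rintro ⟨hdigit, h⟩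
    rw [hcarry hdigit, pow_succ']
    exact mul_dvd_mul_left p h

theorem natCast_choose_sub_one_ne_zero_iff {p r : ℕ} [Fact (1 < p)] (hr : r < p) :
    (r.choose (p - 1) : ZMod p) ≠ 0 ↔ r = p - 1 := by
  rcases Nat.lt_or_ge r (p - 1) with h | h
  · simp [Nat.choose_eq_zero_of_lt h, h.ne]
  · obtain rfl : r = p - 1 := by omega
    simp

/-- The base-`p` digits of `p ^ k - 1` are all `p - 1`, so by Lucas' theorem `C(m, p ^ k - 1)` is
nonzero modulo `p` iff the last `k` digits of `m` are all `p - 1`. -/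
theorem natCast_choose_pow_sub_one_ne_zero_iff {p : ℕ} [hp : Fact p.Prime] (k m : ℕ) :
    (m.choose (p ^ k - 1) : ZMod p) ≠ 0 ↔ p ^ k ∣ m + 1 := by
  induction k generalizing m with
  | zero => simp
  | succ k ih =>
    have hp0 := hp.out.pos
    have hdigits : p ^ (k + 1) - 1 = (p - 1) + p * (p ^ k - 1) := by
      have := Nat.one_le_pow k p hp0
      rw [pow_succ', Nat.mul_sub_one]
      have : p ≤ p * p ^ k := Nat.le_mul_of_pos_right p this
      omega
    have hmod : (p ^ (k + 1) - 1) % p = p - 1 := by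
      rw [hdigits, Nat.add_mul_mod_self_left, Nat.mod_eq_of_lt (Nat.sub_lt hp0 one_pos)]
    have hdiv : (p ^ (k + 1) - 1) / p = p ^ k - 1 := by
      rw [hdigits, Nat.add_mul_div_left _ _ hp0, Nat.div_eq_of_lt (Nat.sub_lt hp0 one_pos),
        zero_add]
    rw [(ZMod.natCast_eq_natCast_iff _ _ _).mpr Choose.choose_modEq_choose_mod_mul_choose_div_nat,
      hmod, hdiv, Nat.cast_mul, mul_ne_zero_iff, ih,
      natCast_choose_sub_one_ne_zero_iff (Nat.mod_lt m hp0), pow_succ_dvd_add_one_iff hp0]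

theorem dvd_add_sub_one_sub_mod_add_one_iff {q : ℕ} (hq : 0 < q) (x a : ℕ) :
    q ∣ x + (q - 1 - a % q) + 1 ↔ x ≡ a [MOD q] := by
  have hshift : ((q - 1 - a % q + 1 : ℕ) : ZMod q) = -a := by
    have hlt := Nat.mod_lt a hq
    rw [show q - 1 - a % q + 1 = q - a % q by omega, Nat.cast_sub hlt.le, ZMod.natCast_self,
      ZMod.natCast_mod, zero_sub]
  rw [← ZMod.natCast_eq_natCast_iff, ← ZMod.natCast_eq_zero_iff, add_assoc, Nat.cast_add,
    hshift, add_neg_eq_zero]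

theorem natCast_choose_ne_zero_iff_modEq {p : ℕ} [Fact p.Prime] (k x a : ℕ) :
    ((x + (p ^ k - 1 - a % p ^ k)).choose (p ^ k - 1) : ZMod p) ≠ 0 ↔ x ≡ a [MOD p ^ k] := by
  rw [natCast_choose_pow_sub_one_ne_zero_iff,
    dvd_add_sub_one_sub_mod_add_one_iff (pow_pos (Fact.out : p.Prime).pos k)]

end Nat

theorem linearIndependent_of_apply_eq_zero_of_ne {ι β R : Type*} [Ring R] [NoZeroDivisors R]
    (f : ι → β → R) (b : ι → β) (hdiag : ∀ i, f i (b i) ≠ 0)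
    (hoff : ∀ i j, i ≠ j → f i (b j) = 0) : LinearIndependent R f := by
  classical
  rw [linearIndependent_iff']
  intro s g hg i hi
  have hgi : ∑ j ∈ s, g j * f j (b i) = g i * f i (b i) :=
    Finset.sum_eq_single_of_mem i hi fun j _ hji => by rw [hoff j i hji, mul_zero]
  have := congrFun hg (b i)
  simp only [Finset.sum_apply, Pi.smul_apply, smul_eq_mul, Pi.zero_apply, hgi] at this
  exact (mul_eq_zero.mp this).resolve_right (hdiag i)

namespace Finset

section SubsetIndicator

variable {α R : Type*} [DecidableEq α] [Semiring R]

def subsetIndicator (T : Finset α) : Finset α → R := fun B => if T ⊆ B then 1 else 0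

theorem natCast_choose_card_inter (A B : Finset α) (i : ℕ) :
    ((#(A ∩ B)).choose i : R) = ∑ T ∈ A.powersetCard i, subsetIndicator T B := by
  simp only [subsetIndicator, sum_boole, ← card_powersetCard]
  congr 2
  ext T
  simp [mem_powersetCard, subset_inter_iff, and_right_comm]

theorem natCast_choose_card_inter_add_mem_span (A : Finset α) (c m : ℕ) :
    (fun B => ((#(A ∩ B) + c).choose m : R)) ∈
      Submodule.span R (subsetIndicator '' {T | #T ≤ m}) := by
  have hvandermonde : (fun B => ((#(A ∩ B) + c).choose m : R)) =
      ∑ ij ∈ antidiagonal m,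
        (c.choose ij.2 : R) • ∑ T ∈ A.powersetCard ij.1, subsetIndicator T := by
    funext B
    simp only [Nat.add_choose_eq, Nat.cast_sum, Nat.cast_mul, natCast_choose_card_inter,
      sum_apply, Pi.smul_apply, smul_eq_mul, sum_mul, mul_sum, Nat.cast_comm]
  rw [hvandermonde]
  refine Submodule.sum_mem _ fun ij hij =>
    Submodule.smul_mem _ _ <| Submodule.sum_mem _ fun T hT => Submodule.subset_span ⟨T, ?_, rfl⟩
  rw [mem_powersetCard] at hT
  rw [HasAntidiagonal.mem_antidiagonal] at hij
  change #T ≤ m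
  omega

end SubsetIndicator

theorem card_filter_card_lt_eq_sum_choose (α : Type*) [Fintype α] (m : ℕ) :
    #{T : Finset α | #T < m} = ∑ i ∈ range m, (Fintype.card α).choose i := by
  rw [card_eq_sum_card_fiberwise (f := card) (t := range m) fun T hT => by simpa using hT]
  refine sum_congr rfl fun i hi => ?_
  rw [← card_univ, ← card_powersetCard]
  congr 1
  ext T
  simp_all

end Finset

theorem stmt_18_general (n q : ℕ) (hq : IsPrimePow q)
    (L : Finset ℕ)
    (F : Finset (Finset (Fin n)))
    (havoid : ∀ A ∈ F, ¬ ∃ ℓ ∈ L, A.card ≡ ℓ [MOD q])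
    (hinter : ∀ A ∈ F, ∀ B ∈ F, A ≠ B → ∃ ℓ ∈ L, (A ∩ B).card ≡ ℓ [MOD q]) :
    F.card ≤ ∑ i ∈ Finset.range q, n.choose i := by
  obtain ⟨p, k, hp, -, rfl⟩ := hq
  have := Fact.mk hp.nat_prime
  let f : F → Finset (Fin n) → ZMod p := fun A B =>
    ((#(A.1 ∩ B) + (p ^ k - 1 - #A.1 % p ^ k)).choose (p ^ k - 1) : ℕ)
  have hf (A : F) (B : Finset (Fin n)) : f A B ≠ 0 ↔ #(A.1 ∩ B) ≡ #A.1 [MOD p ^ k] :=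
    Nat.natCast_choose_ne_zero_iff_modEq k _ _
  have hindep : LinearIndependent (ZMod p) f := by
    refine linearIndependent_of_apply_eq_zero_of_ne f Subtype.val
      (fun A => (hf A A).mpr (by rw [inter_self])) fun A B hAB => not_not.mp fun h => ?_
    obtain ⟨ℓ, hℓ, hmod⟩ := hinter A A.2 B B.2 (Subtype.coe_ne_coe.mpr hAB)
    exact havoid A A.2 ⟨ℓ, hℓ, ((hf A B).mp h).symm.trans hmod⟩
  let small : Finset (Finset (Fin n)) := {T | #T < p ^ k}
  have hspan (A : F) :
      f A ∈ Submodule.span (ZMod p) (small.image (subsetIndicator (R := ZMod p)) : Set _) := by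
    convert natCast_choose_card_inter_add_mem_span A.1 _ (p ^ k - 1) using 2
    ext
    simp [small, Nat.lt_iff_le_pred (pow_pos hp.nat_prime.pos k)]
  calc #F = Fintype.card F := (Fintype.card_coe F).symm
    _ ≤ #(small.image subsetIndicator) := by
      simpa using linearIndependent_le_span_aux' f hindep _ (Set.range_subset_iff.mpr hspan)
    _ ≤ #small := card_image_le
    _ = ∑ i ∈ range (p ^ k), n.choose i := by
      rw [card_filter_card_lt_eq_sum_choose, Fintype.card_fin]

theorem stmt_18 (n q s : ℕ) (hq : IsPrimePow q)
    (L : Finset ℕ) (hL : L ⊆ Finset.range q) (hLs : L.card = s)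
    (F : Finset (Finset (Fin n)))
    (havoid : ∀ A ∈ F, ¬ ∃ ℓ ∈ L, A.card ≡ ℓ [MOD q])
    (hinter : ∀ A ∈ F, ∀ B ∈ F, A ≠ B → ∃ ℓ ∈ L, (A ∩ B).card ≡ ℓ [MOD q]) :
    F.card ≤ ∑ i ∈ Finset.range q, n.choose i :=
  stmt_18_general n q hq L F havoid hinter
end
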